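/- arXiv:2001.07905 — 4 statements merged into one kernel-verified Lean document; each statement's English description precedes it below -/
import Mathlib

section
/- A functional φ ∈ Φ is a viscosity solution of the Cauchy problem if and only if it satisfies the terminal condition φ(ϑ,z,w(·)) = σ(z,w(·)) for all (z,w(·)) ∈ ℝ^n × PC and the inequalities: p0 + H(τ,z,w(·),p) ≤ 0 for every (p0,p) ∈ D⁻φ(τ,z,w(·)), and q0 + H(τ,z,w(·),q) ≥ 0 for every (q0,q) ∈ D⁺φ(τ,z,w(·)), for all (τ,z,w(·)) ∈ G with τ < ϑ. -/
/-!
If a `C¹` function `ψ` touches `φ` from below along the constant extension `κ`, on a one-sided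
neighbourhood `O⁺_δ(τ, z)`, then Taylor's formula for `ψ` puts `(∂ₜψ, ∇ψ)(τ, z)` into `D⁻φ`;
so the subdifferential inequality implies the viscosity one.

Conversely, for `(p₀, p) ∈ D⁻φ(τ, z, w)` the defect
`N(t, x) = φ(τ, z, w) + (t - τ) p₀ + ⟪x - z, p⟫ - φ(t, x, κₜ)` is `o(ρ)`, `ρ = max (t - τ) ‖x - z‖`.
Its monotone envelope `M(r) = sup {N | ρ ≤ r}` is dominated by a `C¹` function `g` with
`g 0 = g' 0 = 0`, obtained by averaging twice: `t ↦ 2 t⁻² ∫_t^{2t} M` is continuous and dominates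
`M s / s` on `[s, 2s]`, and its primitive `g s = ∫_0^{2s}` dominates `M`. The function
`ψ(t, x) = (t - τ) p₀ + ⟪x - z, p⟫ - g (t - τ) - g ‖x - z‖` is then `C¹` with derivative
`(p₀, p)` at `(τ, z)` and touches `φ` from below; at the point `(τ, z)` itself one uses that a
functional of class `Φ` does not see the history beyond `[-h, 0)`, where `κ_τ` and `w` agree.
Superdifferentials are subdifferentials of `-φ`.
-/


noncomputable section

open MeasureTheory Set Filter Topology Asymptotics RealInnerProductSpace
open scoped NNReal

namespace DGPaper

abbrev E (n : ℕ) : Type := EuclideanSpace ℝ (Fin n)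

variable {n l m : ℕ}

/-- `x` is piecewise continuous on `[a,b)` (equivalently `[a,b]`, the value at `b` being free):
there is a finite partition `a = ξ₀ < ξ₁ < … = b` such that `x` is continuous on each
`[ξ i, ξ (i+1))` and has a finite left limit at each `ξ (i+1)`. -/
def PCOn (x : ℝ → E n) (a b : ℝ) : Prop :=
  ∃ k : ℕ, ∃ ξ : Fin (k + 2) → ℝ, StrictMono ξ ∧ ξ 0 = a ∧ ξ (Fin.last (k + 1)) = b ∧
    ∀ i : Fin (k + 1), ContinuousOn x (Ico (ξ i.castSucc) (ξ i.succ)) ∧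
      ∃ L : E n, Tendsto x (𝓝[<] ξ i.succ) (𝓝 L)

/-- membership in the space `PC = PC([-h,0), ℝⁿ)`. -/
def PCh (h : ℝ) (w : ℝ → E n) : Prop := PCOn w (-h) 0

/-- `‖w‖₁ = ∫_{-h}^0 ‖w ξ‖ dξ`. -/
def norm1 (h : ℝ) (w : ℝ → E n) : ℝ := ∫ ξ in (-h)..(0:ℝ), ‖w ξ‖

/-- `‖w‖_∞ = sup_{ξ ∈ [-h,0)} ‖w ξ‖`. -/
def normInf (h : ℝ) (w : ℝ → E n) : ℝ := sSup ((fun ξ => ‖w ξ‖) '' Ico (-h) (0 : ℝ))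

/-- `(z, w) ∈ P(α)`. -/
def memP (h α : ℝ) (z : E n) (w : ℝ → E n) : Prop := PCh h w ∧ ‖z‖ ≤ α ∧ normInf h w ≤ α

/-- the history segment `x_t(ξ) = x (t + ξ)`. -/
def seg (x : ℝ → E n) (t : ℝ) : ℝ → E n := fun ξ => x (t + ξ)

/-- the constant right extension `κ(·)` of `(τ, z, w)`, i.e. the unique element of
`Λ₀(τ,z,w(·))`. -/
def ext0 (τ : ℝ) (z : E n) (w : ℝ → E n) : ℝ → E n := fun t => if t < τ then w (t - τ) else z

/-- the set `Λ(τ,z,w(·))` of Lipschitz right extensions. -/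
def Lam (ϑ h τ : ℝ) (z : E n) (w : ℝ → E n) : Set (ℝ → E n) :=
  {x | PCOn x (τ - h) ϑ ∧ x τ = z ∧ (∀ t ∈ Ico (τ - h) τ, x t = w (t - τ)) ∧
    ∃ K : ℝ≥0, LipschitzOnWith K x (Icc τ ϑ)}

/-- membership in the class `Φ`. -/
def InPhi (t0 ϑ h : ℝ) (φ : ℝ → E n → (ℝ → E n) → ℝ) : Prop :=
  (∀ (z : E n) (w : ℝ → E n), PCh h w → ContinuousOn (fun τ => φ τ z w) (Icc t0 ϑ)) ∧
  ∀ α > (0 : ℝ), ∃ lφ > (0 : ℝ), ∀ τ ∈ Icc t0 ϑ, ∀ (z z' : E n) (w w' : ℝ → E n),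
    memP h α z w → memP h α z' w' →
    |φ τ z w - φ τ z' w'| ≤ lφ * (‖z - z'‖ + norm1 h (fun ξ => w ξ - w' ξ))

/-- condition (C1). -/
def CondC1 (t0 ϑ h : ℝ) (f : ℝ → E n → (ℝ → E n) → E l → E m → E n)
    (f0 : ℝ → E n → (ℝ → E n) → E l → E m → ℝ) : Prop :=
  ∀ (x : E n) (r : ℝ → E n), PCh h r →
    ContinuousOn (fun p : ℝ × E l × E m => f p.1 x r p.2.1 p.2.2)
      (Icc t0 ϑ ×ˢ (univ : Set (E l × E m))) ∧
    ContinuousOn (fun p : ℝ × E l × E m => f0 p.1 x r p.2.1 p.2.2)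
      (Icc t0 ϑ ×ˢ (univ : Set (E l × E m)))

/-- condition (C2). -/
def CondC2 (t0 ϑ h : ℝ) (U : Set (E l)) (V : Set (E m))
    (f : ℝ → E n → (ℝ → E n) → E l → E m → E n)
    (f0 : ℝ → E n → (ℝ → E n) → E l → E m → ℝ) : Prop :=
  ∃ cf > (0 : ℝ), ∀ t ∈ Icc t0 ϑ, ∀ (x : E n) (r : ℝ → E n), PCh h r →
    ∀ u ∈ U, ∀ v ∈ V,
      ‖f t x r u v‖ + |f0 t x r u v| ≤ cf * (1 + ‖x‖ + norm1 h r + ‖r (-h)‖)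

/-- condition (C3). -/
def CondC3 (t0 ϑ h : ℝ) (U : Set (E l)) (V : Set (E m))
    (f : ℝ → E n → (ℝ → E n) → E l → E m → E n)
    (f0 : ℝ → E n → (ℝ → E n) → E l → E m → ℝ) : Prop :=
  ∀ α > (0 : ℝ), ∃ lf > (0 : ℝ), ∀ t ∈ Icc t0 ϑ, ∀ (x x' : E n) (r r' : ℝ → E n),
    memP h α x r → memP h α x' r' → ∀ u ∈ U, ∀ v ∈ V,
      ‖f t x r u v - f t x' r' u v‖ + |f0 t x r u v - f0 t x' r' u v| ≤
        lf * (‖x - x'‖ + norm1 h (fun ξ => r ξ - r' ξ) + ‖r (-h) - r' (-h)‖)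

/-- the Hamiltonian `H`. -/
def Ham (U : Set (E l)) (V : Set (E m))
    (f : ℝ → E n → (ℝ → E n) → E l → E m → E n)
    (f0 : ℝ → E n → (ℝ → E n) → E l → E m → ℝ)
    (τ : ℝ) (z : E n) (w : ℝ → E n) (s : E n) : ℝ :=
  ⨅ u : U, ⨆ v : V, (⟪f τ z w u v, s⟫ + f0 τ z w u v)

/-- condition (C4), Isaacs' condition. -/
def CondC4 (t0 ϑ h : ℝ) (U : Set (E l)) (V : Set (E m))
    (f : ℝ → E n → (ℝ → E n) → E l → E m → E n)
    (f0 : ℝ → E n → (ℝ → E n) → E l → E m → ℝ) : Prop :=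
  ∀ t ∈ Icc t0 ϑ, ∀ (x : E n) (r : ℝ → E n), PCh h r → ∀ s : E n,
    (⨅ u : U, ⨆ v : V, (⟪f t x r u v, s⟫ + f0 t x r u v)) =
    (⨆ v : V, ⨅ u : U, (⟪f t x r u v, s⟫ + f0 t x r u v))

/-- condition (C5). -/
def CondC5 (h : ℝ) (σ : E n → (ℝ → E n) → ℝ) : Prop :=
  ∀ α > (0 : ℝ), ∃ ls > (0 : ℝ), ∀ (x x' : E n) (r r' : ℝ → E n),
    memP h α x r → memP h α x' r' →
    |σ x r - σ x' r'| ≤ ls * (‖x - x'‖ + norm1 h (fun ξ => r ξ - r' ξ))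

/-- the set of admissible control realizations on `[τ, ϑ]` with values in `U`. -/
def Ctrl (ϑ τ : ℝ) {d : ℕ} (U : Set (E d)) : Set (ℝ → E d) :=
  {u | Measurable u ∧ ∀ t ∈ Icc τ ϑ, u t ∈ U}

/-- `x(·)` is the motion of the delay system generated from the initial position `(τ,z,w(·))`
by the control realizations `u(·)`, `v(·)`. -/
def IsMotion (ϑ h : ℝ) (f : ℝ → E n → (ℝ → E n) → E l → E m → E n)
    (τ : ℝ) (z : E n) (w : ℝ → E n) (u : ℝ → E l) (v : ℝ → E m) (x : ℝ → E n) : Prop :=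
  x τ = z ∧ (∀ t ∈ Ico (τ - h) τ, x t = w (t - τ)) ∧ PCOn x (τ - h) ϑ ∧
  (∃ K : ℝ≥0, LipschitzOnWith K x (Icc τ ϑ)) ∧
  ∀ᵐ t ∂(volume : Measure ℝ), t ∈ Icc τ ϑ → HasDerivAt x (f t (x t) (seg x t) (u t) (v t)) t

/-- `X` assigns to initial data and controls the unique generated motion. -/
def MotionMap (t0 ϑ h : ℝ) (U : Set (E l)) (V : Set (E m))
    (f : ℝ → E n → (ℝ → E n) → E l → E m → E n)
    (X : ℝ → E n → (ℝ → E n) → (ℝ → E l) → (ℝ → E m) → ℝ → E n) : Prop :=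
  ∀ τ ∈ Icc t0 ϑ, ∀ (z : E n) (w : ℝ → E n), PCh h w →
    ∀ u ∈ Ctrl ϑ τ U, ∀ v ∈ Ctrl ϑ τ V,
      IsMotion ϑ h f τ z w u v (X τ z w u v) ∧
      ∀ x' : ℝ → E n, IsMotion ϑ h f τ z w u v x' → EqOn x' (X τ z w u v) (Icc (τ - h) ϑ)

/-- the quality index `γ` along a motion. -/
def cost (ϑ : ℝ) (f0 : ℝ → E n → (ℝ → E n) → E l → E m → ℝ) (σ : E n → (ℝ → E n) → ℝ)
    (τ : ℝ) (x : ℝ → E n) (u : ℝ → E l) (v : ℝ → E m) : ℝ :=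
  σ (x ϑ) (seg x ϑ) + ∫ t in τ..ϑ, f0 t (x t) (seg x t) (u t) (v t)

/-- non-anticipative strategy of the first player. -/
def Nonant1 (ϑ τ : ℝ) (U : Set (E l)) (V : Set (E m)) (Q : (ℝ → E m) → ℝ → E l) : Prop :=
  (∀ v ∈ Ctrl ϑ τ V, Q v ∈ Ctrl ϑ τ U) ∧
  ∀ v ∈ Ctrl ϑ τ V, ∀ v' ∈ Ctrl ϑ τ V, ∀ t ∈ Icc τ ϑ,
    (∀ᵐ ξ ∂(volume : Measure ℝ), ξ ∈ Icc τ t → v ξ = v' ξ) →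
    (∀ᵐ ξ ∂(volume : Measure ℝ), ξ ∈ Icc τ t → Q v ξ = Q v' ξ)

/-- non-anticipative strategy of the second player. -/
def Nonant2 (ϑ τ : ℝ) (U : Set (E l)) (V : Set (E m)) (Q : (ℝ → E l) → ℝ → E m) : Prop :=
  (∀ u ∈ Ctrl ϑ τ U, Q u ∈ Ctrl ϑ τ V) ∧
  ∀ u ∈ Ctrl ϑ τ U, ∀ u' ∈ Ctrl ϑ τ U, ∀ t ∈ Icc τ ϑ,
    (∀ᵐ ξ ∂(volume : Measure ℝ), ξ ∈ Icc τ t → u ξ = u' ξ) →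
    (∀ᵐ ξ ∂(volume : Measure ℝ), ξ ∈ Icc τ t → Q u ξ = Q u' ξ)

/-- the lower value functional `ρᵘ`. -/
def rhoU (ϑ : ℝ) (U : Set (E l)) (V : Set (E m))
    (f0 : ℝ → E n → (ℝ → E n) → E l → E m → ℝ) (σ : E n → (ℝ → E n) → ℝ)
    (X : ℝ → E n → (ℝ → E n) → (ℝ → E l) → (ℝ → E m) → ℝ → E n)
    (τ : ℝ) (z : E n) (w : ℝ → E n) : ℝ :=
  ⨅ Q : {Q : (ℝ → E m) → ℝ → E l // Nonant1 ϑ τ U V Q},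
    ⨆ v : Ctrl ϑ τ V, cost ϑ f0 σ τ (X τ z w (Q.1 v.1) v.1) (Q.1 v.1) v.1

/-- the upper value functional `ρᵛ`. -/
def rhoV (ϑ : ℝ) (U : Set (E l)) (V : Set (E m))
    (f0 : ℝ → E n → (ℝ → E n) → E l → E m → ℝ) (σ : E n → (ℝ → E n) → ℝ)
    (X : ℝ → E n → (ℝ → E n) → (ℝ → E l) → (ℝ → E m) → ℝ → E n)
    (τ : ℝ) (z : E n) (w : ℝ → E n) : ℝ :=
  ⨆ Q : {Q : (ℝ → E l) → ℝ → E m // Nonant2 ϑ τ U V Q},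
    ⨅ u : Ctrl ϑ τ U, cost ϑ f0 σ τ (X τ z w u.1 (Q.1 u.1)) u.1 (Q.1 u.1)

/-- the neighborhood `O⁺_δ(τ,z)`. -/
def Oplus (δ τ : ℝ) (z : E n) : Set (ℝ × E n) := {p | p.1 ∈ Icc τ (τ + δ) ∧ ‖p.2 - z‖ ≤ δ}

/-- the terminal condition `φ(ϑ,z,w(·)) = σ(z,w(·))`. -/
def TerminalCond (ϑ h : ℝ) (σ : E n → (ℝ → E n) → ℝ) (φ : ℝ → E n → (ℝ → E n) → ℝ) : Prop :=
  ∀ (z : E n) (w : ℝ → E n), PCh h w → φ ϑ z w = σ z w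

/-- `φ ∈ Φ` is a viscosity solution of the Cauchy problem. -/
def IsViscositySol (t0 ϑ h : ℝ) (U : Set (E l)) (V : Set (E m))
    (f : ℝ → E n → (ℝ → E n) → E l → E m → E n)
    (f0 : ℝ → E n → (ℝ → E n) → E l → E m → ℝ) (σ : E n → (ℝ → E n) → ℝ)
    (φ : ℝ → E n → (ℝ → E n) → ℝ) : Prop :=
  InPhi t0 ϑ h φ ∧ TerminalCond ϑ h σ φ ∧
  (∀ τ ∈ Ico t0 ϑ, ∀ (z : E n) (w : ℝ → E n), PCh h w →
    ∀ ψ : ℝ × E n → ℝ, ContDiff ℝ 1 ψ → ∀ δ > (0 : ℝ),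
      (∀ p ∈ Oplus δ τ z, φ τ z w - ψ (τ, z) ≤ φ p.1 p.2 (seg (ext0 τ z w) p.1) - ψ p) →
      deriv (fun t => ψ (t, z)) τ +
        Ham U V f f0 τ z w (gradient (fun x => ψ (τ, x)) z) ≤ 0) ∧
  (∀ τ ∈ Ico t0 ϑ, ∀ (z : E n) (w : ℝ → E n), PCh h w →
    ∀ ψ : ℝ × E n → ℝ, ContDiff ℝ 1 ψ → ∀ δ > (0 : ℝ),
      (∀ p ∈ Oplus δ τ z, φ p.1 p.2 (seg (ext0 τ z w) p.1) - ψ p ≤ φ τ z w - ψ (τ, z)) →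
      0 ≤ deriv (fun t => ψ (t, z)) τ +
        Ham U V f f0 τ z w (gradient (fun x => ψ (τ, x)) z))

/-- `φ` has ci-derivatives `(c, g)` at `(τ,z,w(·))`. -/
def HasCiDerivAt (ϑ h : ℝ) (φ : ℝ → E n → (ℝ → E n) → ℝ) (c : ℝ) (g : E n)
    (τ : ℝ) (z : E n) (w : ℝ → E n) : Prop :=
  ∀ y ∈ Lam ϑ h τ z w,
    (fun p : ℝ × E n => φ p.1 p.2 (seg y p.1) - φ τ z w - (p.1 - τ) * c - ⟪p.2 - z, g⟫)
      =o[𝓝[Icc τ ϑ ×ˢ (univ : Set (E n))] ((τ, z) : ℝ × E n)]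
        fun p : ℝ × E n => |p.1 - τ| + ‖p.2 - z‖

/-- the subdifferential `D⁻φ(τ,z,w(·))`. -/
def Dminus (φ : ℝ → E n → (ℝ → E n) → ℝ) (τ : ℝ) (z : E n) (w : ℝ → E n) : Set (ℝ × E n) :=
  {p | ∀ ε > (0 : ℝ), ∃ δ > (0 : ℝ), ∀ q ∈ Oplus δ τ z, q ≠ ((τ, z) : ℝ × E n) →
    -ε ≤ (φ q.1 q.2 (seg (ext0 τ z w) q.1) - φ τ z w - (q.1 - τ) * p.1 - ⟪q.2 - z, p.2⟫) /
      (|q.1 - τ| + ‖q.2 - z‖)}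

/-- the superdifferential `D⁺φ(τ,z,w(·))`. -/
def Dplus (φ : ℝ → E n → (ℝ → E n) → ℝ) (τ : ℝ) (z : E n) (w : ℝ → E n) : Set (ℝ × E n) :=
  {q | ∀ ε > (0 : ℝ), ∃ δ > (0 : ℝ), ∀ p ∈ Oplus δ τ z, p ≠ ((τ, z) : ℝ × E n) →
    (φ p.1 p.2 (seg (ext0 τ z w) p.1) - φ τ z w - (p.1 - τ) * q.1 - ⟪p.2 - z, q.2⟫) /
      (|p.1 - τ| + ‖p.2 - z‖) ≤ ε}

/-- the lower right directional derivative `∂⁻_{(l0,l)} φ(τ,z,w(·))`. -/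
def lowerDirDeriv (φ : ℝ → E n → (ℝ → E n) → ℝ) (τ : ℝ) (z : E n) (w : ℝ → E n)
    (l0 : ℝ) (lv : E n) : ℝ :=
  Filter.liminf
    (fun p : ℝ × (ℝ × E n) =>
      (φ (τ + p.2.1 * p.1) (z + p.1 • p.2.2) (seg (ext0 τ z w) (τ + p.2.1 * p.1)) - φ τ z w) / p.1)
    ((𝓝[>] (0 : ℝ)) ×ˢ 𝓝[Ici (0 : ℝ) ×ˢ (univ : Set (E n))] ((l0, lv) : ℝ × E n))

/-- the upper right directional derivative `∂⁺_{(l0,l)} φ(τ,z,w(·))`. -/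
def upperDirDeriv (φ : ℝ → E n → (ℝ → E n) → ℝ) (τ : ℝ) (z : E n) (w : ℝ → E n)
    (l0 : ℝ) (lv : E n) : ℝ :=
  Filter.limsup
    (fun p : ℝ × (ℝ × E n) =>
      (φ (τ + p.2.1 * p.1) (z + p.1 • p.2.2) (seg (ext0 τ z w) (τ + p.2.1 * p.1)) - φ τ z w) / p.1)
    ((𝓝[>] (0 : ℝ)) ×ˢ 𝓝[Ici (0 : ℝ) ×ˢ (univ : Set (E n))] ((l0, lv) : ℝ × E n))

/-- the stability (u- and v-stability) property of a functional. -/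
def IsStable (t0 ϑ h : ℝ) (U : Set (E l)) (V : Set (E m))
    (f0 : ℝ → E n → (ℝ → E n) → E l → E m → ℝ)
    (X : ℝ → E n → (ℝ → E n) → (ℝ → E l) → (ℝ → E m) → ℝ → E n)
    (φ : ℝ → E n → (ℝ → E n) → ℝ) : Prop :=
  ∀ τ ∈ Icc t0 ϑ, ∀ (z : E n) (w : ℝ → E n), PCh h w → ∀ t ∈ Icc τ ϑ,
    (⨆ v : Ctrl ϑ τ V, ⨅ u : Ctrl ϑ τ U,
        (φ t (X τ z w u.1 v.1 t) (seg (X τ z w u.1 v.1) t) +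
          ∫ ξ in τ..t, f0 ξ (X τ z w u.1 v.1 ξ) (seg (X τ z w u.1 v.1) ξ) (u.1 ξ) (v.1 ξ)))
      ≤ φ τ z w ∧
    φ τ z w ≤
      ⨅ u : Ctrl ϑ τ U, ⨆ v : Ctrl ϑ τ V,
        (φ t (X τ z w u.1 v.1 t) (seg (X τ z w u.1 v.1) t) +
          ∫ ξ in τ..t, f0 ξ (X τ z w u.1 v.1 ξ) (seg (X τ z w u.1 v.1) ξ) (u.1 ξ) (v.1 ξ))

end DGPaper

section Modulus

variable {M : ℝ → ℝ}

theorem Monotone.mul_le_integral_self_two_mul (hM : Monotone M) {s : ℝ} (hs : 0 ≤ s) :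
    s * M s ≤ ∫ x in s..2 * s, M x := by
  have h : ∫ _ in s..2 * s, M s ≤ ∫ x in s..2 * s, M x :=
    intervalIntegral.integral_mono_on (by linarith) intervalIntegrable_const hM.intervalIntegrable
      fun x hx => hM hx.1
  rwa [intervalIntegral.integral_const, smul_eq_mul, show 2 * s - s = s by ring] at h

theorem Monotone.integral_self_two_mul_le (hM : Monotone M) {s : ℝ} (hs : 0 ≤ s) :
    ∫ x in s..2 * s, M x ≤ s * M (2 * s) := by
  have h : ∫ x in s..2 * s, M x ≤ ∫ _ in s..2 * s, M (2 * s) :=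
    intervalIntegral.integral_mono_on (by linarith) hM.intervalIntegrable intervalIntegrable_const
      fun x hx => hM hx.2
  rwa [intervalIntegral.integral_const, smul_eq_mul, show 2 * s - s = s by ring] at h

theorem Monotone.continuous_integral_self_two_mul (hM : Monotone M) :
    Continuous fun s => ∫ x in s..2 * s, M x := by
  have hint : ∀ a b, IntervalIntegrable M volume a b := fun a b => hM.intervalIntegrable
  have hP := intervalIntegral.continuous_primitive hint 0
  refine Continuous.congr (f := fun s => (∫ x in (0 : ℝ)..2 * s, M x) - ∫ x in (0 : ℝ)..s, M x)
    ((hP.comp (continuous_const.mul continuous_id)).sub hP) fun s => ?_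
  exact intervalIntegral.integral_interval_sub_left (hint 0 _) (hint 0 _)

def meanSlope (M : ℝ → ℝ) (t : ℝ) : ℝ :=
  if 0 < t then 2 * (∫ x in t..2 * t, M x) / t ^ 2 else 0

theorem meanSlope_nonneg (hM0 : ∀ r, 0 ≤ M r) (t : ℝ) : 0 ≤ meanSlope M t := by
  unfold meanSlope
  split_ifs with ht
  · exact div_nonneg (mul_nonneg zero_le_two
      (intervalIntegral.integral_nonneg (by linarith) fun x _ => hM0 x)) (sq_nonneg t)
  · exact le_rfl

theorem meanSlope_le (hM : Monotone M) {t : ℝ} (ht : 0 < t) :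
    meanSlope M t ≤ 4 * (M (2 * t) / (2 * t)) := by
  rw [meanSlope, if_pos ht, div_le_iff₀ (by positivity)]
  have := hM.integral_self_two_mul_le ht.le
  field_simp
  nlinarith

theorem div_le_meanSlope (hM : Monotone M) (hM0 : ∀ r, 0 ≤ M r) {s t : ℝ} (hs : 0 < s)
    (ht : t ∈ Icc s (2 * s)) : M s / s ≤ meanSlope M t := by
  have ht0 : 0 < t := hs.trans_le ht.1
  rw [meanSlope, if_pos ht0, div_le_div_iff₀ hs (by positivity)]
  have h1 := hM.mul_le_integral_self_two_mul ht0.le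
  have h2 : t * M s ≤ t * M t := mul_le_mul_of_nonneg_left (hM ht.1) ht0.le
  have h3 : M s * t ^ 2 ≤ 2 * s * (t * M s) := by
    nlinarith [mul_nonneg (sub_nonneg.2 ht.2) (mul_nonneg ht0.le (hM0 s))]
  nlinarith

theorem continuous_meanSlope (hM : Monotone M) (hM0 : ∀ r, 0 ≤ M r)
    (hsmall : ∀ ε > 0, ∃ δ > 0, ∀ r, 0 < r → r ≤ δ → M r ≤ ε * r) :
    Continuous (meanSlope M) := by
  rw [continuous_iff_continuousAt]
  intro t
  rcases lt_trichotomy t 0 with ht | rfl | ht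
  · refine ContinuousAt.congr (f := fun _ => 0) continuousAt_const ?_
    filter_upwards [Iio_mem_nhds ht] with u hu
    rw [meanSlope, if_neg (not_lt.2 (le_of_lt hu))]
  · rw [Metric.continuousAt_iff]
    intro ε hε
    obtain ⟨δ, hδ, hδM⟩ := hsmall (ε / 8) (by positivity)
    refine ⟨δ / 2, by positivity, fun u hu => ?_⟩
    have h0 : meanSlope M 0 = 0 := by simp [meanSlope]
    rw [Real.dist_eq, sub_zero] at hu
    rw [Real.dist_eq, h0, sub_zero, abs_of_nonneg (meanSlope_nonneg hM0 u)]
    rcases le_or_gt u 0 with hu0 | hu0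
    · rw [meanSlope, if_neg (not_lt.2 hu0)]
      exact hε
    · have h2u := hδM (2 * u) (by positivity) (by linarith [le_abs_self u])
      calc meanSlope M u ≤ 4 * (M (2 * u) / (2 * u)) := meanSlope_le hM hu0
        _ ≤ 4 * (ε / 8) :=
          mul_le_mul_of_nonneg_left ((div_le_iff₀ (by positivity)).2 h2u) (by norm_num)
        _ < ε := by linarith
  · refine ContinuousAt.congr ?_ ?_ (f := fun u => 2 * (∫ x in u..2 * u, M x) / u ^ 2)
    · exact (continuousAt_const.mul hM.continuous_integral_self_two_mul.continuousAt).div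
        (continuousAt_id.pow 2) (by positivity)
    · filter_upwards [Ioi_mem_nhds ht] with u hu
      rw [meanSlope, if_pos (mem_Ioi.1 hu)]

theorem exists_contDiff_ge_of_monotone (hM : Monotone M) (hM0 : ∀ r, 0 ≤ M r)
    (hsmall : ∀ ε > 0, ∃ δ > 0, ∀ r, 0 < r → r ≤ δ → M r ≤ ε * r) :
    ∃ g : ℝ → ℝ, ContDiff ℝ 1 g ∧ g 0 = 0 ∧ HasDerivAt g 0 0 ∧ (∀ r, 0 ≤ r → 0 ≤ g r) ∧
      ∀ r, 0 < r → M r ≤ g r := by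
  have hk := continuous_meanSlope hM hM0 hsmall
  have hP : ∀ s, HasDerivAt (fun s => ∫ t in (0 : ℝ)..s, meanSlope M t) (meanSlope M s) s :=
    fun s => (hk.integral_hasStrictDerivAt 0 s).hasDerivAt
  have hPC : ContDiff ℝ 1 fun s => ∫ t in (0 : ℝ)..s, meanSlope M t :=
    contDiff_one_iff_deriv.2 ⟨fun s => (hP s).differentiableAt,
      by rwa [funext fun s => (hP s).deriv]⟩
  refine ⟨fun s => ∫ t in (0 : ℝ)..2 * s, meanSlope M t,
    hPC.comp (contDiff_const.mul contDiff_id), by simp, ?_, fun r hr => ?_, fun r hr => ?_⟩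
  · have h := (hP (2 * 0)).comp (0 : ℝ) ((hasDerivAt_id (0 : ℝ)).const_mul 2)
    rwa [show meanSlope M (2 * 0) * (2 * 1) = 0 by simp [meanSlope]] at h
  · exact intervalIntegral.integral_nonneg (by linarith) fun t _ => meanSlope_nonneg hM0 t
  · have hint : ∀ a b, IntervalIntegrable (meanSlope M) volume a b :=
      fun a b => hk.intervalIntegrable a b
    show M r ≤ ∫ t in (0 : ℝ)..2 * r, meanSlope M t
    rw [← intervalIntegral.integral_add_adjacent_intervals (hint 0 r) (hint r (2 * r))]
    have h0 : 0 ≤ ∫ t in (0 : ℝ)..r, meanSlope M t :=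
      intervalIntegral.integral_nonneg hr.le fun t _ => meanSlope_nonneg hM0 t
    have h1 : ∫ _ in r..2 * r, M r / r ≤ ∫ t in r..2 * r, meanSlope M t :=
      intervalIntegral.integral_mono_on (by linarith) intervalIntegrable_const (hint _ _)
        fun t ht => div_le_meanSlope hM hM0 hr ht
    rw [intervalIntegral.integral_const, smul_eq_mul, show 2 * r - r = r by ring,
      mul_div_cancel₀ _ hr.ne'] at h1
    linarith

end Modulus

section Dominating

variable {X : Type*} {S : Set X} {N ρ : X → ℝ}

theorem exists_monotone_modulus
    (hN : ∀ ε > 0, ∃ δ > 0, ∀ q ∈ S, 0 < ρ q → ρ q ≤ δ → N q ≤ ε * ρ q) :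
    ∃ M : ℝ → ℝ, Monotone M ∧ (∀ r, 0 ≤ M r) ∧
      (∀ ε > 0, ∃ δ > 0, ∀ r, 0 < r → r ≤ δ → M r ≤ ε * r) ∧
      ∃ δ > 0, ∀ q ∈ S, 0 < ρ q → ρ q ≤ δ → N q ≤ M (ρ q) := by
  obtain ⟨r₀, hr₀, hr₀N⟩ := hN 1 one_pos
  set A : ℝ → Set ℝ := fun r => insert 0 (N '' {q ∈ S | 0 < ρ q ∧ ρ q ≤ min r r₀})
  have hA_mono : Monotone A := fun a b hab =>
    insert_subset_insert <| image_mono fun q hq =>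
      ⟨hq.1, hq.2.1, hq.2.2.trans (min_le_min_right r₀ hab)⟩
  have hA_bdd : ∀ r, BddAbove (A r) := by
    refine fun r => ⟨r₀, ?_⟩
    rintro _ (rfl | ⟨q, ⟨hqS, hq0, hqr⟩, rfl⟩)
    · exact hr₀.le
    · have hq := hr₀N q hqS hq0 (hqr.trans (min_le_right _ _))
      linarith [min_le_right r r₀]
  refine ⟨fun r => sSup (A r), fun a b hab => csSup_le_csSup (hA_bdd b) (insert_nonempty _ _)
    (hA_mono hab), fun r => le_csSup (hA_bdd r) (mem_insert _ _), fun ε hε => ?_,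
    r₀, hr₀, fun q hqS hq0 hqr => le_csSup (hA_bdd _) (mem_insert_of_mem _
      ⟨q, ⟨hqS, hq0, le_min le_rfl hqr⟩, rfl⟩)⟩
  obtain ⟨δ, hδ, hδN⟩ := hN ε hε
  refine ⟨δ, hδ, fun r hr hrδ => csSup_le (insert_nonempty _ _) ?_⟩
  rintro _ (rfl | ⟨q, ⟨hqS, hq0, hqr⟩, rfl⟩)
  · positivity
  · have hqr' : ρ q ≤ r := hqr.trans (min_le_left _ _)
    exact (hδN q hqS hq0 (hqr'.trans hrδ)).trans (mul_le_mul_of_nonneg_left hqr' hε.le)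

theorem exists_contDiff_dominating
    (hN : ∀ ε > 0, ∃ δ > 0, ∀ q ∈ S, 0 < ρ q → ρ q ≤ δ → N q ≤ ε * ρ q) :
    ∃ g : ℝ → ℝ, ContDiff ℝ 1 g ∧ g 0 = 0 ∧ HasDerivAt g 0 0 ∧ (∀ r, 0 ≤ r → 0 ≤ g r) ∧
      ∃ δ > 0, ∀ q ∈ S, 0 < ρ q → ρ q ≤ δ → N q ≤ g (ρ q) := by
  obtain ⟨M, hM, hM0, hMsmall, δ, hδ, hNM⟩ := exists_monotone_modulus hN
  obtain ⟨g, hg, hg0, hg', hg_nonneg, hMg⟩ := exists_contDiff_ge_of_monotone hM hM0 hMsmall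
  exact ⟨g, hg, hg0, hg', hg_nonneg, δ, hδ, fun q hqS hq0 hqδ =>
    (hNM q hqS hq0 hqδ).trans (hMg _ hq0)⟩

end Dominating

section NormComp

variable {F : Type*} [NormedAddCommGroup F] {g : ℝ → ℝ}

theorem HasDerivAt.hasFDerivAt_comp_norm_zero [NormedSpace ℝ F] (hg : HasDerivAt g 0 0) :
    HasFDerivAt (fun x : F => g ‖x‖) (0 : F →L[ℝ] ℝ) 0 := by
  rw [hasFDerivAt_iff_isLittleO_nhds_zero]
  have h := (hasDerivAt_iff_isLittleO_nhds_zero.1 hg).comp_tendsto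
    (continuous_norm.tendsto' (0 : F) 0 norm_zero)
  refine isLittleO_norm_right.1 ?_
  simpa [Function.comp_def] using h

variable [InnerProductSpace ℝ F]

theorem ContDiff.comp_norm_of_hasDerivAt_zero (hg : ContDiff ℝ 1 g) (hg0 : HasDerivAt g 0 0) :
    ContDiff ℝ 1 fun x : F => g ‖x‖ := by
  have hf0 := hg0.hasFDerivAt_comp_norm_zero (F := F)
  have hcd : ∀ x : F, x ≠ 0 → ContDiffAt ℝ 1 (fun y : F => g ‖y‖) x := fun x hx =>
    hg.contDiffAt.comp x (contDiffAt_norm ℝ hx)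
  -- away from `0` the chain rule applies, and `‖fderiv ‖·‖ x‖ ≤ 1`
  have hbound : ∀ x : F, ‖fderiv ℝ (fun y : F => g ‖y‖) x‖ ≤ ‖deriv g ‖x‖‖ := by
    intro x
    rcases eq_or_ne x 0 with rfl | hx
    · rw [hf0.fderiv, norm_zero]
      exact norm_nonneg _
    · have hn : HasFDerivAt (‖·‖) (fderiv ℝ (‖·‖) x) x :=
        ((contDiffAt_norm ℝ hx).differentiableAt one_ne_zero).hasFDerivAt
      rw [show (fun y : F => g ‖y‖) = g ∘ (‖·‖) from rfl,
        ((hg.differentiable one_ne_zero _).hasDerivAt.comp_hasFDerivAt x hn).fderiv, norm_smul]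
      exact mul_le_of_le_one_right (norm_nonneg _)
        (norm_fderiv_le_of_lipschitz ℝ (f := (‖·‖ : F → ℝ)) lipschitzWith_one_norm)
  refine contDiff_one_iff_fderiv.2 ⟨fun x => ?_, continuous_iff_continuousAt.2 fun x => ?_⟩
  · rcases eq_or_ne x 0 with rfl | hx
    · exact hf0.differentiableAt
    · exact (hcd x hx).differentiableAt one_ne_zero
  · rcases eq_or_ne x 0 with rfl | hx
    · have hd : Tendsto (fun y : F => deriv g ‖y‖) (𝓝 0) (𝓝 0) := by
        simpa [hg0.deriv, Function.comp_def] using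
          ((contDiff_one_iff_deriv.1 hg).2.tendsto _).comp (continuous_norm.tendsto (0 : F))
      rw [ContinuousAt, hf0.fderiv]
      exact squeeze_zero_norm hbound (by simpa using hd.norm)
    · exact (hcd x hx).continuousAt_fderiv one_ne_zero

end NormComp

section TestFunction

variable {F : Type*} [NormedAddCommGroup F] [InnerProductSpace ℝ F]

theorem DifferentiableAt.fderiv_prod_apply [CompleteSpace F] {ψ : ℝ × F → ℝ} {τ : ℝ} {z : F}
    (hψ : DifferentiableAt ℝ ψ (τ, z)) (v : ℝ × F) :
    fderiv ℝ ψ (τ, z) v =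
      v.1 * deriv (fun t => ψ (t, z)) τ + ⟪v.2, gradient (fun x => ψ (τ, x)) z⟫ := by
  have ht : HasDerivAt (fun t => ψ (t, z)) (fderiv ℝ ψ (τ, z) (1, 0)) τ :=
    hψ.hasFDerivAt.comp_hasDerivAt τ ((hasDerivAt_id τ).prodMk (hasDerivAt_const τ z))
  have hx : HasFDerivAt (fun x => ψ (τ, x))
      ((fderiv ℝ ψ (τ, z)).comp (ContinuousLinearMap.inr ℝ ℝ F)) z :=
    hψ.hasFDerivAt.comp z (hasFDerivAt_prodMk_right τ z)
  have hv : v = v.1 • ((1 : ℝ), (0 : F)) + ((0 : ℝ), v.2) := by ext <;> simp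
  rw [ht.deriv, real_inner_comm, inner_gradient_left, hx.fderiv]
  nth_rewrite 1 [hv]
  rw [map_add, map_smul, smul_eq_mul]
  rfl

theorem gradient_fun_neg [CompleteSpace F] (f : F → ℝ) (x : F) :
    gradient (fun y => -f y) x = -gradient f x := by
  simp only [gradient, fderiv_fun_neg, map_neg]

variable {g : ℝ → ℝ} {τ : ℝ} {z : F} {p : ℝ × F}

def penalizedAffine (τ : ℝ) (z : F) (p : ℝ × F) (g : ℝ → ℝ) (q : ℝ × F) : ℝ :=
  (q.1 - τ) * p.1 + ⟪q.2 - z, p.2⟫ - g (q.1 - τ) - g ‖q.2 - z‖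

theorem penalizedAffine_self (hg : g 0 = 0) : penalizedAffine τ z p g (τ, z) = 0 := by
  simp [penalizedAffine, hg]

theorem penalizedAffine_neg (q : ℝ × F) :
    penalizedAffine τ z (-p) g q = -penalizedAffine τ z p (-g) q := by
  simp only [penalizedAffine, Prod.fst_neg, Prod.snd_neg, inner_neg_right, Pi.neg_apply]
  ring

theorem contDiff_penalizedAffine (hg : ContDiff ℝ 1 g) (hg0 : HasDerivAt g 0 0) :
    ContDiff ℝ 1 (penalizedAffine τ z p g) :=
  ((((contDiff_fst.sub contDiff_const).mul contDiff_const).add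
    ((contDiff_snd.sub contDiff_const).inner ℝ contDiff_const)).sub
    (hg.comp (contDiff_fst.sub contDiff_const))).sub
    ((hg.comp_norm_of_hasDerivAt_zero hg0).comp (contDiff_snd.sub contDiff_const))

theorem deriv_penalizedAffine (hg0 : HasDerivAt g 0 0) :
    deriv (fun t => penalizedAffine τ z p g (t, z)) τ = p.1 := by
  have hg0' : HasDerivAt g 0 (τ - τ) := by rwa [sub_self]
  have h := ((((hasDerivAt_id τ).sub_const τ).mul_const p.1).add_const ⟪z - z, p.2⟫).sub
    (hg0'.comp_sub_const τ τ) |>.sub_const (g ‖z - z‖)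
  simpa [penalizedAffine] using h.deriv

open InnerProductSpace in
theorem gradient_penalizedAffine [CompleteSpace F] (hg0 : HasDerivAt g 0 0) :
    gradient (fun x => penalizedAffine τ z p g (τ, x)) z = p.2 := by
  refine HasGradientAt.gradient (hasGradientAt_iff_hasFDerivAt.2 ?_)
  have hin : HasFDerivAt (fun x : F => ⟪x - z, p.2⟫) (toDual ℝ F p.2) z := by
    have h := ((toDual ℝ F p.2 : F →L[ℝ] ℝ).hasFDerivAt (x := z)).sub_const ⟪z, p.2⟫
    refine h.congr_of_eventuallyEq (Eventually.of_forall fun x => ?_)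
    simp [toDual_apply_apply, inner_sub_left, real_inner_comm]
  have hpen : HasFDerivAt (fun x : F => g ‖x - z‖) (0 : F →L[ℝ] ℝ) z := by
    have h0 : HasFDerivAt (fun y : F => g ‖y‖) (0 : F →L[ℝ] ℝ) (z - z) := by
      rw [sub_self]
      exact hg0.hasFDerivAt_comp_norm_zero
    simpa [Function.comp_def] using
      h0.comp (f := fun x : F => x - z) z ((hasFDerivAt_id z).sub_const z)
  simpa [penalizedAffine] using (hin.sub_const (g 0)).fun_sub hpen

end TestFunction

namespace DGPaper

variable {n : ℕ}

theorem PCOn.left_lt_right {x : ℝ → E n} {a b : ℝ} (hx : PCOn x a b) : a < b := by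
  obtain ⟨k, ξ, hξ, h0, hlast, -⟩ := hx
  rw [← h0, ← hlast]
  exact hξ (Fin.pos_iff_ne_zero.2 (Fin.last_pos.ne'))

theorem PCOn.congr {x y : ℝ → E n} {a b : ℝ} (hx : PCOn x a b) (hxy : EqOn y x (Ico a b)) :
    PCOn y a b := by
  obtain ⟨k, ξ, hξ, h0, hlast, hpieces⟩ := hx
  refine ⟨k, ξ, hξ, h0, hlast, fun i => ?_⟩
  have hsub : Ico (ξ i.castSucc) (ξ i.succ) ⊆ Ico a b := fun t ht =>
    ⟨h0 ▸ (hξ.monotone (Fin.zero_le _)).trans ht.1,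
      hlast ▸ ht.2.trans_le (hξ.monotone (Fin.le_last _))⟩
  obtain ⟨hcont, L, hL⟩ := hpieces i
  refine ⟨hcont.congr (hxy.mono hsub), L, hL.congr' ?_⟩
  filter_upwards [Ioo_mem_nhdsLT (hξ (Fin.castSucc_lt_succ (i := i)))] with t ht
  exact (hxy (hsub ⟨ht.1.le, ht.2⟩)).symm

theorem normInf_congr {h : ℝ} {w w' : ℝ → E n} (hw : EqOn w w' (Ico (-h) 0)) :
    normInf h w = normInf h w' := by
  unfold normInf
  rw [image_congr fun ξ hξ => by rw [hw hξ]]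

theorem norm1_sub_eq_zero {h : ℝ} {w w' : ℝ → E n} (hh : -h ≤ 0) (hw : EqOn w w' (Ico (-h) 0)) :
    norm1 h (fun ξ => w ξ - w' ξ) = 0 := by
  rw [norm1, intervalIntegral.integral_of_le hh, integral_Ioc_eq_integral_Ioo,
    setIntegral_congr_fun measurableSet_Ioo (g := fun _ => 0)
      fun ξ hξ => by simp [hw ⟨hξ.1.le, hξ.2⟩], integral_zero]

theorem InPhi.apply_eq_of_eqOn {t0 ϑ h : ℝ} {φ : ℝ → E n → (ℝ → E n) → ℝ}
    (hφ : InPhi t0 ϑ h φ) {τ : ℝ} (hτ : τ ∈ Icc t0 ϑ) (z : E n) {w w' : ℝ → E n}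
    (hw : PCh h w) (hww' : EqOn w' w (Ico (-h) 0)) : φ τ z w' = φ τ z w := by
  set α := 1 + ‖z‖ + |normInf h w|
  have hmem : memP h α z w := ⟨hw, by simp only [α]; linarith [abs_nonneg (normInf h w)],
    by simp only [α]; linarith [le_abs_self (normInf h w), norm_nonneg z]⟩
  have hmem' : memP h α z w' :=
    ⟨hw.congr hww', hmem.2.1, (normInf_congr hww').trans_le hmem.2.2⟩
  obtain ⟨lφ, -, hlip⟩ := hφ.2 α (by positivity)
  have h := hlip τ hτ z z w' w hmem' hmem
  rw [sub_self, norm_zero, norm1_sub_eq_zero hw.left_lt_right.le hww', add_zero, mul_zero] at h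
  exact sub_eq_zero.1 (abs_nonpos_iff.1 h)

theorem eqOn_seg_ext0_self (τ : ℝ) (z : E n) (w : ℝ → E n) :
    EqOn (seg (ext0 τ z w) τ) w (Iio 0) := fun ξ hξ => by
  simp [seg, ext0, show τ + ξ < τ by linarith [mem_Iio.1 hξ]]

theorem InPhi.apply_seg_ext0_self {t0 ϑ h : ℝ} {φ : ℝ → E n → (ℝ → E n) → ℝ}
    (hφ : InPhi t0 ϑ h φ) {τ : ℝ} (hτ : τ ∈ Icc t0 ϑ) (z : E n) {w : ℝ → E n} (hw : PCh h w) :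
    φ τ z (seg (ext0 τ z w) τ) = φ τ z w :=
  hφ.apply_eq_of_eqOn hτ z hw ((eqOn_seg_ext0_self τ z w).mono Ico_subset_Iio_self)

section Oplus

variable {δ τ : ℝ} {z : E n} {q : ℝ × E n}

theorem mem_Oplus_iff : q ∈ Oplus δ τ z ↔ τ ≤ q.1 ∧ max (q.1 - τ) ‖q.2 - z‖ ≤ δ := by
  simp only [Oplus, mem_ofPred_eq, mem_Icc, max_le_iff]
  constructor
  · rintro ⟨⟨h1, h2⟩, h3⟩
    exact ⟨h1, by linarith, h3⟩
  · rintro ⟨h1, h2, h3⟩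
    exact ⟨⟨h1, by linarith⟩, h3⟩

theorem Oplus_mono {δ' : ℝ} (h : δ ≤ δ') : Oplus δ τ z ⊆ Oplus δ' τ z := fun _ hq =>
  mem_Oplus_iff.2 ⟨(mem_Oplus_iff.1 hq).1, (mem_Oplus_iff.1 hq).2.trans h⟩

theorem max_sub_norm_pos_iff (hq : τ ≤ q.1) : 0 < max (q.1 - τ) ‖q.2 - z‖ ↔ q ≠ (τ, z) := by
  simp only [lt_max_iff, norm_pos_iff, sub_pos, sub_ne_zero, hq.lt_iff_ne', ne_eq, Prod.ext_iff,
    not_and_or]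

theorem abs_sub_add_norm_sub_pos (hq : q ≠ (τ, z)) : 0 < |q.1 - τ| + ‖q.2 - z‖ := by
  rcases eq_or_ne q.1 τ with h1 | h1
  · have h2 : q.2 ≠ z := fun h2 => hq (Prod.ext h1 h2)
    have := norm_pos_iff.2 (sub_ne_zero.2 h2)
    positivity
  · have := abs_pos.2 (sub_ne_zero.2 h1)
    positivity

theorem exists_Oplus_subset_of_eventually {P : ℝ × E n → Prop} (hP : ∀ᶠ q in 𝓝 (τ, z), P q) :
    ∃ δ > 0, ∀ q ∈ Oplus δ τ z, P q := by
  obtain ⟨ε, hε, hεP⟩ := Metric.eventually_nhds_iff.1 hP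
  refine ⟨ε / 2, half_pos hε, fun q hq => hεP ?_⟩
  obtain ⟨hqτ, hqδ⟩ := mem_Oplus_iff.1 hq
  rw [Prod.dist_eq, Real.dist_eq, abs_of_nonneg (sub_nonneg.2 hqτ), dist_eq_norm]
  linarith

end Oplus

section Differentials

variable {φ : ℝ → E n → (ℝ → E n) → ℝ} {τ : ℝ} {z : E n} {w : ℝ → E n}

theorem neg_mem_Dminus_neg_iff {q : ℝ × E n} :
    -q ∈ Dminus (fun t x r => -φ t x r) τ z w ↔ q ∈ Dplus φ τ z w := by
  simp only [Dminus, Dplus, mem_ofPred_eq, Prod.fst_neg, Prod.snd_neg, inner_neg_right]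
  refine forall₂_congr fun ε _ => exists_congr fun δ => and_congr_right fun _ =>
    forall₂_congr fun p _ => imp_congr_right fun _ => ?_
  rw [neg_le, ← neg_div]
  ring_nf

theorem mem_Dminus_of_le_sub {ψ : ℝ × E n → ℝ} (hψ : DifferentiableAt ℝ ψ (τ, z)) {δ : ℝ}
    (hδ : 0 < δ)
    (h : ∀ q ∈ Oplus δ τ z, φ τ z w - ψ (τ, z) ≤ φ q.1 q.2 (seg (ext0 τ z w) q.1) - ψ q) :
    (deriv (fun t => ψ (t, z)) τ, gradient (fun x => ψ (τ, x)) z) ∈ Dminus φ τ z w := by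
  intro ε hε
  obtain ⟨δ', hδ', hψδ'⟩ :=
    exists_Oplus_subset_of_eventually (isLittleO_iff.1 hψ.hasFDerivAt.isLittleO hε)
  refine ⟨min δ δ', lt_min hδ hδ', fun q hq hqc => ?_⟩
  have h1 := h q (Oplus_mono (min_le_left _ _) hq)
  have h2 := hψδ' q (Oplus_mono (min_le_right _ _) hq)
  rw [hψ.fderiv_prod_apply, Real.norm_eq_abs, abs_le, Prod.fst_sub, Prod.snd_sub] at h2
  have h3 : ‖q - (τ, z)‖ ≤ |q.1 - τ| + ‖q.2 - z‖ := by
    rw [Prod.norm_def, Prod.fst_sub, Prod.snd_sub, Real.norm_eq_abs]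
    exact max_le (le_add_of_nonneg_right (norm_nonneg _)) (le_add_of_nonneg_left (abs_nonneg _))
  rw [le_div_iff₀ (abs_sub_add_norm_sub_pos hqc)]
  nlinarith [h2.1, mul_le_mul_of_nonneg_left h3 hε.le]

theorem mem_Dplus_of_sub_le {ψ : ℝ × E n → ℝ} (hψ : DifferentiableAt ℝ ψ (τ, z)) {δ : ℝ}
    (hδ : 0 < δ)
    (h : ∀ q ∈ Oplus δ τ z, φ q.1 q.2 (seg (ext0 τ z w) q.1) - ψ q ≤ φ τ z w - ψ (τ, z)) :
    (deriv (fun t => ψ (t, z)) τ, gradient (fun x => ψ (τ, x)) z) ∈ Dplus φ τ z w := by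
  rw [← neg_mem_Dminus_neg_iff]
  have := mem_Dminus_of_le_sub (φ := fun t x r => -φ t x r) (w := w) (ψ := fun q => -ψ q)
    hψ.neg hδ fun q hq => by linarith [h q hq]
  rwa [deriv.fun_neg, gradient_fun_neg] at this

end Differentials

section Touching

variable {φ : ℝ → E n → (ℝ → E n) → ℝ} {τ : ℝ} {z : E n} {w : ℝ → E n}

theorem exists_penalizedAffine_le_of_mem_Dminus (hc : φ τ z (seg (ext0 τ z w) τ) = φ τ z w)
    {p : ℝ × E n} (hp : p ∈ Dminus φ τ z w) :
    ∃ g : ℝ → ℝ, ContDiff ℝ 1 g ∧ HasDerivAt g 0 0 ∧ ∃ δ > 0, ∀ q ∈ Oplus δ τ z,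
      φ τ z w - penalizedAffine τ z p g (τ, z) ≤
        φ q.1 q.2 (seg (ext0 τ z w) q.1) - penalizedAffine τ z p g q := by
  have hN : ∀ ε > 0, ∃ δ > 0, ∀ q ∈ {q : ℝ × E n | τ ≤ q.1},
      0 < max (q.1 - τ) ‖q.2 - z‖ → max (q.1 - τ) ‖q.2 - z‖ ≤ δ →
      φ τ z w + (q.1 - τ) * p.1 + ⟪q.2 - z, p.2⟫ - φ q.1 q.2 (seg (ext0 τ z w) q.1) ≤
        ε * max (q.1 - τ) ‖q.2 - z‖ := by
    intro ε hε
    obtain ⟨δ, hδ, hpδ⟩ := hp (ε / 2) (half_pos hε)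
    refine ⟨δ, hδ, fun q hqτ hq0 hqδ => ?_⟩
    have hqc := (max_sub_norm_pos_iff hqτ).1 hq0
    have h1 := hpδ q (mem_Oplus_iff.2 ⟨hqτ, hqδ⟩) hqc
    rw [le_div_iff₀ (abs_sub_add_norm_sub_pos hqc), abs_of_nonneg (sub_nonneg.2 hqτ)] at h1
    nlinarith [le_max_left (q.1 - τ) ‖q.2 - z‖, le_max_right (q.1 - τ) ‖q.2 - z‖]
  obtain ⟨g, hg, hg0, hg', hg_nonneg, δ, hδ, hgN⟩ := exists_contDiff_dominating hN
  refine ⟨g, hg, hg', δ, hδ, fun q hq => ?_⟩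
  rcases eq_or_ne q (τ, z) with rfl | hqc
  · rw [hc]
  obtain ⟨hqτ, hqδ⟩ := mem_Oplus_iff.1 hq
  have h1 := hgN q hqτ ((max_sub_norm_pos_iff hqτ).2 hqc) hqδ
  have h2 : g (max (q.1 - τ) ‖q.2 - z‖) ≤ g (q.1 - τ) + g ‖q.2 - z‖ := by
    rcases max_choice (q.1 - τ) ‖q.2 - z‖ with hmax | hmax <;> rw [hmax]
    · linarith [hg_nonneg _ (norm_nonneg (q.2 - z))]
    · linarith [hg_nonneg _ (sub_nonneg.2 hqτ)]
  rw [penalizedAffine_self hg0, penalizedAffine]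
  linarith

theorem exists_penalizedAffine_ge_of_mem_Dplus (hc : φ τ z (seg (ext0 τ z w) τ) = φ τ z w)
    {p : ℝ × E n} (hp : p ∈ Dplus φ τ z w) :
    ∃ g : ℝ → ℝ, ContDiff ℝ 1 g ∧ HasDerivAt g 0 0 ∧ ∃ δ > 0, ∀ q ∈ Oplus δ τ z,
      φ q.1 q.2 (seg (ext0 τ z w) q.1) - penalizedAffine τ z p g q ≤
        φ τ z w - penalizedAffine τ z p g (τ, z) := by
  obtain ⟨g, hg, hg', δ, hδ, h⟩ := exists_penalizedAffine_le_of_mem_Dminus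
    (φ := fun t x r => -φ t x r) (by rw [hc]) (neg_mem_Dminus_neg_iff.2 hp)
  refine ⟨-g, hg.neg, by simpa using hg'.neg, δ, hδ, fun q hq => ?_⟩
  have := h q hq
  rw [penalizedAffine_neg, penalizedAffine_neg] at this
  linarith

end Touching

theorem viscosity_solution_iff_subsuperdifferential_inequalities_general
    (t0 ϑ h : ℝ) (n : ℕ)
    (l m : ℕ) (U : Set (E l)) (V : Set (E m))
    (f : ℝ → E n → (ℝ → E n) → E l → E m → E n)
    (f0 : ℝ → E n → (ℝ → E n) → E l → E m → ℝ) (σ : E n → (ℝ → E n) → ℝ)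
    (φ : ℝ → E n → (ℝ → E n) → ℝ) (hφ : InPhi t0 ϑ h φ) :
    IsViscositySol t0 ϑ h U V f f0 σ φ ↔
      (TerminalCond ϑ h σ φ ∧
        ∀ τ ∈ Ico t0 ϑ, ∀ (z : E n) (w : ℝ → E n), PCh h w →
          (∀ p ∈ Dminus φ τ z w, p.1 + Ham U V f f0 τ z w p.2 ≤ 0) ∧
          (∀ q ∈ Dplus φ τ z w, 0 ≤ q.1 + Ham U V f f0 τ z w q.2)) := by
  constructor
  · rintro ⟨-, hterm, hsub, hsuper⟩
    refine ⟨hterm, fun τ hτ z w hw => ?_⟩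
    have hc := hφ.apply_seg_ext0_self (Ico_subset_Icc_self hτ) z hw
    refine ⟨fun p hp => ?_, fun p hp => ?_⟩
    · obtain ⟨g, hg, hg', δ, hδ, htouch⟩ := exists_penalizedAffine_le_of_mem_Dminus hc hp
      have := hsub τ hτ z w hw _ (contDiff_penalizedAffine hg hg') δ hδ htouch
      rwa [deriv_penalizedAffine hg', gradient_penalizedAffine hg'] at this
    · obtain ⟨g, hg, hg', δ, hδ, htouch⟩ := exists_penalizedAffine_ge_of_mem_Dplus hc hp
      have := hsuper τ hτ z w hw _ (contDiff_penalizedAffine hg hg') δ hδ htouch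
      rwa [deriv_penalizedAffine hg', gradient_penalizedAffine hg'] at this
  · rintro ⟨hterm, hineq⟩
    refine ⟨hφ, hterm, fun τ hτ z w hw ψ hψ δ hδ htouch => ?_,
      fun τ hτ z w hw ψ hψ δ hδ htouch => ?_⟩
    · exact (hineq τ hτ z w hw).1 _
        (mem_Dminus_of_le_sub ((hψ.differentiable one_ne_zero) _) hδ htouch)
    · exact (hineq τ hτ z w hw).2 _
        (mem_Dplus_of_sub_le ((hψ.differentiable one_ne_zero) _) hδ htouch)

theorem viscosity_solution_iff_subsuperdifferential_inequalities
    (t0 ϑ h : ℝ) (hth : t0 < ϑ) (hh : 0 < h) (n : ℕ) (hn : 0 < n)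
    (l m : ℕ) (U : Set (E l)) (V : Set (E m))
    (hUc : IsCompact U) (hVc : IsCompact V) (hUne : U.Nonempty) (hVne : V.Nonempty)
    (f : ℝ → E n → (ℝ → E n) → E l → E m → E n)
    (f0 : ℝ → E n → (ℝ → E n) → E l → E m → ℝ) (σ : E n → (ℝ → E n) → ℝ)
    (hC1 : CondC1 t0 ϑ h f f0) (hC2 : CondC2 t0 ϑ h U V f f0)
    (hC3 : CondC3 t0 ϑ h U V f f0) (hC4 : CondC4 t0 ϑ h U V f f0) (hC5 : CondC5 h σ)
    (φ : ℝ → E n → (ℝ → E n) → ℝ) (hφ : InPhi t0 ϑ h φ) :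
    IsViscositySol t0 ϑ h U V f f0 σ φ ↔
      (TerminalCond ϑ h σ φ ∧
        ∀ τ ∈ Ico t0 ϑ, ∀ (z : E n) (w : ℝ → E n), PCh h w →
          (∀ p ∈ Dminus φ τ z w, p.1 + Ham U V f f0 τ z w p.2 ≤ 0) ∧
          (∀ q ∈ Dplus φ τ z w, 0 ≤ q.1 + Ham U V f f0 τ z w q.2)) :=
  viscosity_solution_iff_subsuperdifferential_inequalities_general t0 ϑ h n l m U V f f0 σ φ hφ

end DGPaper
end
end

section
/- Let a functional φ ∈ Φ be a viscosity solution of the Cauchy problem. If φ is ci-differentiable at a point (τ,z,w(·)) ∈ G with τ < ϑ, then φ satisfies the Hamilton–Jacobi equation at this point: ∂^{ci}_{τ,w} φ(τ,z,w(·)) + H(τ,z,w(·), ∇_z φ(τ,z,w(·))) = 0. -/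
noncomputable section

open MeasureTheory Set Filter Topology Asymptotics RealInnerProductSpace
open scoped NNReal

namespace DGPaper

variable {n l m : ℕ}

/-!
The constant extension `κ = ext0 τ z w` lies in `Λ(τ,z,w)`, so ci-differentiability says that
`φ(t,x,κ_t) - φ(τ,z,w) - c (t - τ) - ⟪x - z, g⟫ = o(|t - τ| + ‖x - z‖)` for `t ≥ τ`.
Such a remainder is bounded by `Φ(t - τ) + Φ ‖x - z‖` for a `C¹` function `Φ` with
`Φ 0 = Φ' 0 = 0`: take a monotone modulus `ω` of the little-o and smooth `r ω(r)` by averaging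
twice over dyadic intervals `[s, 2s]`. Then `c t + ⟪x, g⟫ ∓ (Φ(t - τ) + Φ ‖x - z‖)` are `C¹`
test functions touching `φ` at `(τ,z)` from below and from above, with time derivative `c` and
gradient `g` there, so the two viscosity inequalities give `c + H ≤ 0 ≤ c + H`.
-/

lemma Fin.strictMono_snoc {α : Type*} [Preorder α] {k : ℕ} {ξ : Fin (k + 1) → α}
    (hξ : StrictMono ξ) {c : α} (hc : ξ (Fin.last k) < c) :
    StrictMono (Fin.snoc (α := fun _ => α) ξ c) := by
  refine Fin.strictMono_iff_lt_succ.2 fun i => ?_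
  induction i using Fin.lastCases with
  | last => simpa only [Fin.succ_last, Fin.snoc_castSucc, Fin.snoc_last] using hc
  | cast j =>
    simpa only [Fin.succ_castSucc, Fin.snoc_castSucc] using hξ (Fin.castSucc_lt_succ (i := j))

lemma tendsto_sub_const_nhdsLT (a τ : ℝ) :
    Tendsto (fun t => t - τ) (𝓝[<] (a + τ)) (𝓝[<] a) :=
  tendsto_nhdsWithin_of_tendsto_nhds_of_eventually_within _
    (((continuous_sub_right τ).tendsto' _ _ (add_sub_cancel_right a τ)).mono_left
      nhdsWithin_le_nhds)
    (eventually_nhdsWithin_of_forall fun t (ht : t < a + τ) => show t - τ < a by linarith)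

lemma PCOn.comp_sub_const {x : ℝ → E n} {a b : ℝ} (hx : PCOn x a b) (τ : ℝ) :
    PCOn (fun t => x (t - τ)) (a + τ) (b + τ) := by
  obtain ⟨k, ξ, hξ, hξ0, hξlast, hpieces⟩ := hx
  refine ⟨k, fun i => ξ i + τ, fun i j hij => by simpa using hξ hij, by simp [hξ0],
    by simp [hξlast], fun i => ⟨?_, ?_⟩⟩
  · refine (hpieces i).1.comp (continuous_sub_right τ).continuousOn fun t ht => ?_
    exact ⟨by linarith [ht.1], by linarith [ht.2]⟩
  · obtain ⟨L, hL⟩ := (hpieces i).2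
    exact ⟨L, hL.comp (tendsto_sub_const_nhdsLT _ τ)⟩

lemma PCOn.extend_const {x : ℝ → E n} {a b c : ℝ} (hx : PCOn x a b) (hbc : b < c) (z : E n) :
    PCOn (fun t => if t < b then x t else z) a c := by
  obtain ⟨k, ξ, hξ, hξ0, hξlast, hpieces⟩ := hx
  have hstart : Fin.snoc (α := fun _ => ℝ) ξ c 0 = a := by
    rw [← Fin.castSucc_zero, Fin.snoc_castSucc, hξ0]
  refine ⟨k + 1, Fin.snoc (α := fun _ => ℝ) ξ c, Fin.strictMono_snoc hξ (hξlast ▸ hbc), hstart,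
    Fin.snoc_last _ _, fun i => ?_⟩
  induction i using Fin.lastCases with
  | last =>
    simp only [Fin.succ_last, Fin.snoc_last, Fin.snoc_castSucc, hξlast]
    refine ⟨continuousOn_const.congr fun t ht => if_neg (not_lt.2 ht.1), z, ?_⟩
    refine tendsto_const_nhds.congr' ?_
    filter_upwards [Ioo_mem_nhdsLT hbc] with t ht
    exact (if_neg (not_lt.2 ht.1.le)).symm
  | cast j =>
    have hle : ξ j.succ ≤ b := hξlast ▸ hξ.monotone (Fin.le_last _)
    simp only [Fin.succ_castSucc, Fin.snoc_castSucc]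
    obtain ⟨hcont, L, hL⟩ := hpieces j
    refine ⟨hcont.congr fun t ht => if_pos (ht.2.trans_le hle), L, hL.congr' ?_⟩
    filter_upwards [self_mem_nhdsWithin] with t (ht : t < ξ j.succ)
    exact (if_pos (ht.trans_le hle)).symm

lemma ext0_mem_Lam {ϑ h τ : ℝ} (hτϑ : τ < ϑ) (z : E n) {w : ℝ → E n} (hw : PCh h w) :
    ext0 τ z w ∈ Lam ϑ h τ z w := by
  have hshift := hw.comp_sub_const τ
  rw [neg_add_eq_sub, zero_add] at hshift
  refine ⟨hshift.extend_const hτϑ z, if_neg (lt_irrefl τ), fun t ht => if_pos ht.2, 0, ?_⟩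
  refine LipschitzOnWith.of_dist_le_mul fun t ht s hs => ?_
  simp [ext0, not_lt.2 ht.1, not_lt.2 hs.1]

lemma exists_pos_abs_le_of_isLittleO_dist {P : Type*} [PseudoMetricSpace P] {F : P → ℝ}
    {S : Set P} {p₀ : P} (hF : F =o[𝓝[S] p₀] fun p => dist p p₀) {ε : ℝ} (hε : 0 < ε) :
    ∃ δ > 0, ∀ p ∈ S, dist p p₀ < δ → |F p| ≤ ε * dist p p₀ := by
  obtain ⟨δ, hδ, hball⟩ := Metric.eventually_nhds_iff.1 (eventually_nhdsWithin_iff.1 (hF.def hε))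
  refine ⟨δ, hδ, fun p hp hpδ => ?_⟩
  simpa [abs_of_nonneg dist_nonneg] using hball hpδ hp

lemma exists_modulus_of_isLittleO {P : Type*} [PseudoMetricSpace P] {F : P → ℝ} {S : Set P}
    {p₀ : P} (hF : F =o[𝓝[S] p₀] fun p => dist p p₀) :
    ∃ ω : ℝ → ℝ, Monotone ω ∧ (∀ r, 0 ≤ ω r) ∧ Tendsto ω (𝓝[>] 0) (𝓝 0) ∧
      ∃ δ > 0, ∀ p ∈ S, dist p p₀ ≤ δ → |F p| ≤ ω (dist p p₀) * dist p p₀ := by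
  obtain ⟨δ₁, hδ₁, hδ₁small⟩ := exists_pos_abs_le_of_isLittleO_dist hF one_pos
  -- ratios are only taken within `δ₁ / 2`, where they are at most `1`
  set ratios : ℝ → Set ℝ := fun r =>
    insert 0 ((fun p => |F p| / dist p p₀) '' {p | p ∈ S ∧ dist p p₀ ≤ min r (δ₁ / 2)})
  have hbdd : ∀ r, BddAbove (ratios r) := by
    refine fun r => ⟨1, ?_⟩
    rintro x (rfl | ⟨p, ⟨hpS, hpr⟩, rfl⟩)
    · exact zero_le_one
    · refine div_le_one_of_le₀ ?_ dist_nonneg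
      simpa using hδ₁small p hpS ((hpr.trans (min_le_right _ _)).trans_lt (half_lt_self hδ₁))
  have hmono : Monotone fun r => sSup (ratios r) := by
    refine fun r r' hrr' => csSup_le_csSup (hbdd r') (insert_nonempty _ _) ?_
    refine insert_subset_insert (image_mono fun p ⟨hpS, hpr⟩ => ⟨hpS, ?_⟩)
    exact hpr.trans (min_le_min_right _ hrr')
  have hlim : Tendsto (fun r => sSup (ratios r)) (𝓝[>] 0) (𝓝 0) := by
    refine tendsto_order.2 ⟨fun a ha => Eventually.of_forall fun r =>
      ha.trans_le (le_csSup (hbdd r) (mem_insert _ _)), fun a ha => ?_⟩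
    obtain ⟨δ, hδ, hδsmall⟩ := exists_pos_abs_le_of_isLittleO_dist hF (half_pos ha)
    filter_upwards [Ioo_mem_nhdsGT hδ] with r hr
    refine (csSup_le (insert_nonempty _ _) ?_).trans_lt (half_lt_self ha)
    rintro x (rfl | ⟨p, ⟨hpS, hpr⟩, rfl⟩)
    · exact (half_pos ha).le
    · exact div_le_of_le_mul₀ dist_nonneg (half_pos ha).le
        (hδsmall p hpS ((hpr.trans (min_le_left _ _)).trans_lt hr.2))
  refine ⟨fun r => sSup (ratios r), hmono, fun r => le_csSup (hbdd r) (mem_insert _ _), hlim,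
    δ₁ / 2, half_pos hδ₁, fun p hpS hpδ => ?_⟩
  rcases (dist_nonneg (x := p) (y := p₀)).eq_or_lt with hp0 | hp0
  · have h := hδ₁small p hpS (hpδ.trans_lt (half_lt_self hδ₁))
    rw [← hp0] at h ⊢
    simpa using h
  · rw [← div_le_iff₀ hp0]
    exact le_csSup (hbdd _) (mem_insert_of_mem _ ⟨p, ⟨hpS, le_min le_rfl hpδ⟩, rfl⟩)

section Smoothing

variable {ω : ℝ → ℝ}

def dyadicAverage (ω : ℝ → ℝ) (s : ℝ) : ℝ :=
  if s ≤ 0 then 0 else (∫ r in s..2 * s, ω r) / s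

lemma le_dyadicAverage (hω : Monotone ω) {s : ℝ} (hs : 0 < s) : ω s ≤ dyadicAverage ω s := by
  have h := intervalIntegral.integral_mono_on (by linarith : s ≤ 2 * s)
    (intervalIntegrable_const (μ := volume)) hω.intervalIntegrable fun r hr => hω hr.1
  rw [intervalIntegral.integral_const, smul_eq_mul] at h
  rw [dyadicAverage, if_neg hs.not_ge, le_div_iff₀ hs]
  linarith

lemma dyadicAverage_le (hω : Monotone ω) {s : ℝ} (hs : 0 < s) :
    dyadicAverage ω s ≤ ω (2 * s) := by
  have h := intervalIntegral.integral_mono_on (by linarith : s ≤ 2 * s)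
    hω.intervalIntegrable (intervalIntegrable_const (μ := volume)) fun r hr => hω hr.2
  rw [intervalIntegral.integral_const, smul_eq_mul] at h
  rw [dyadicAverage, if_neg hs.not_ge, div_le_iff₀ hs]
  linarith

lemma continuous_dyadicAverage (hω : Monotone ω) (hlim : Tendsto ω (𝓝[>] 0) (𝓝 0)) :
    Continuous (dyadicAverage ω) := by
  rw [continuous_iff_continuousAt]
  intro s
  rcases lt_trichotomy s 0 with hs | rfl | hs
  · refine (continuousAt_const (y := (0 : ℝ))).congr ?_
    filter_upwards [Iio_mem_nhds hs] with r hr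
    rw [dyadicAverage, if_pos hr.out.le]
  · have hdouble : Tendsto (fun r : ℝ => 2 * r) (𝓝[>] 0) (𝓝[>] 0) :=
      tendsto_nhdsWithin_of_tendsto_nhds_of_eventually_within _
        (((continuous_const_mul (2 : ℝ)).tendsto' 0 0 (by simp)).mono_left nhdsWithin_le_nhds)
        (eventually_nhdsWithin_of_forall fun r (hr : 0 < r) => by simpa using hr)
    have hzero : dyadicAverage ω 0 = 0 := if_pos le_rfl
    refine continuousAt_iff_continuous_left'_right'.2 ⟨?_, ?_⟩
    · refine (continuousWithinAt_const (b := (0 : ℝ))).congr (fun r hr => ?_) hzero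
      rw [dyadicAverage, if_pos hr.out.le]
    · rw [ContinuousWithinAt, hzero]
      exact tendsto_of_tendsto_of_tendsto_of_le_of_le' hlim (hlim.comp hdouble)
        (eventually_nhdsWithin_of_forall fun r hr => le_dyadicAverage hω hr)
        (eventually_nhdsWithin_of_forall fun r hr => dyadicAverage_le hω hr)
  · have hprim := intervalIntegral.continuous_primitive (μ := volume)
      (fun a b => hω.intervalIntegrable (a := a) (b := b)) 0
    have hquot : ContinuousAt
        (fun r => ((∫ t in (0 : ℝ)..2 * r, ω t) - ∫ t in (0 : ℝ)..r, ω t) / r) s :=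
      ((hprim.comp (continuous_const_mul 2)).sub hprim).continuousAt.div continuousAt_id hs.ne'
    refine hquot.congr ?_
    filter_upwards [Ioi_mem_nhds hs] with r hr
    rw [dyadicAverage, if_neg (not_le.2 hr.out),
      intervalIntegral.integral_interval_sub_left hω.intervalIntegrable hω.intervalIntegrable]

lemma exists_contDiff_majorant_mul (hω : Monotone ω) (hlim : Tendsto ω (𝓝[>] 0) (𝓝 0)) :
    ∃ Φ : ℝ → ℝ, ContDiff ℝ 1 Φ ∧ Φ 0 = 0 ∧ deriv Φ 0 = 0 ∧ ∀ r, 0 ≤ r → r * ω r ≤ Φ r := by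
  set ω' := dyadicAverage ω
  have hcont : Continuous ω' := continuous_dyadicAverage hω hlim
  have hint : ∀ a b : ℝ, IntervalIntegrable ω' volume a b := hcont.intervalIntegrable
  have hderiv : ∀ r, HasDerivAt (fun r => ∫ s in r..2 * r, ω' s) (2 * ω' (2 * r) - ω' r) r := by
    intro r
    have hprim : ∀ x, HasDerivAt (fun u => ∫ s in (0 : ℝ)..u, ω' s) (ω' x) x := fun x =>
      (hcont.integral_hasStrictDerivAt 0 x).hasDerivAt
    have h2 : HasDerivAt (fun u => ∫ s in (0 : ℝ)..2 * u, ω' s) (ω' (2 * r) * 2) r :=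
      (hprim (2 * r)).comp r (by simpa using (hasDerivAt_id r).const_mul (2 : ℝ))
    have hsplit : (fun r => ∫ s in r..2 * r, ω' s) =
        fun u => (∫ s in (0 : ℝ)..2 * u, ω' s) - ∫ s in (0 : ℝ)..u, ω' s :=
      funext fun u => (intervalIntegral.integral_interval_sub_left (hint 0 (2 * u)) (hint 0 u)).symm
    rw [hsplit, mul_comm]
    exact h2.sub (hprim r)
  refine ⟨fun r => ∫ s in r..2 * r, ω' s, ?_, by simp, ?_, fun r hr => ?_⟩
  · rw [contDiff_one_iff_deriv]
    refine ⟨fun r => (hderiv r).differentiableAt, ?_⟩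
    rw [funext fun r => (hderiv r).deriv]
    exact (continuous_const.mul (hcont.comp (continuous_const_mul 2))).sub hcont
  · rw [(hderiv 0).deriv, mul_zero, show ω' 0 = 0 from if_pos le_rfl]
    ring
  · rcases hr.eq_or_lt with rfl | hr
    · simp
    have h := intervalIntegral.integral_mono_on (by linarith : r ≤ 2 * r)
      (intervalIntegrable_const (μ := volume)) (hint r (2 * r))
      fun s hs => (hω hs.1).trans (le_dyadicAverage hω (hr.trans_le hs.1))
    rw [intervalIntegral.integral_const, smul_eq_mul] at h
    linarith

end Smoothing

lemma exists_contDiff_majorant_of_isLittleO {P : Type*} [PseudoMetricSpace P] {F : P → ℝ}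
    {S : Set P} {p₀ : P} (hF : F =o[𝓝[S] p₀] fun p => dist p p₀) :
    ∃ Φ : ℝ → ℝ, ContDiff ℝ 1 Φ ∧ Φ 0 = 0 ∧ deriv Φ 0 = 0 ∧ (∀ r, 0 ≤ r → 0 ≤ Φ r) ∧
      ∃ δ > 0, ∀ p ∈ S, dist p p₀ ≤ δ → |F p| ≤ Φ (dist p p₀) := by
  obtain ⟨ω, hω, hω_nonneg, hlim, δ, hδ, hFω⟩ := exists_modulus_of_isLittleO hF
  obtain ⟨Φ, hΦ, hΦ0, hΦ'0, hΦω⟩ := exists_contDiff_majorant_mul hω hlim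
  refine ⟨Φ, hΦ, hΦ0, hΦ'0, fun r hr => (mul_nonneg hr (hω_nonneg r)).trans (hΦω r hr), δ, hδ,
    fun p hpS hpδ => ?_⟩
  exact (hFω p hpS hpδ).trans ((mul_comm _ _).trans_le (hΦω _ dist_nonneg))

section Radial

variable {F : Type*} [NormedAddCommGroup F] {Φ : ℝ → ℝ}

lemma hasFDerivAt_comp_norm_zero [NormedSpace ℝ F] (hΦ : HasDerivAt Φ 0 0) :
    HasFDerivAt (fun x : F => Φ ‖x‖) (0 : F →L[ℝ] ℝ) 0 := by
  rw [hasFDerivAt_iff_isLittleO_nhds_zero]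
  have h := (hasDerivAt_iff_isLittleO_nhds_zero.1 hΦ).comp_tendsto (tendsto_norm_zero (E := F))
  simpa [Function.comp_def] using isLittleO_norm_right.1 h

variable [InnerProductSpace ℝ F]

lemma contDiff_comp_norm (hΦ : ContDiff ℝ 1 Φ) (hΦ0 : deriv Φ 0 = 0) :
    ContDiff ℝ 1 (fun x : F => Φ ‖x‖) := by
  have hzero : HasFDerivAt (fun x : F => Φ ‖x‖) (0 : F →L[ℝ] ℝ) 0 := by
    refine hasFDerivAt_comp_norm_zero ?_
    simpa only [hΦ0] using (hΦ.differentiable one_ne_zero 0).hasDerivAt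
  have hoff : ∀ x : F, x ≠ 0 → ContDiffAt ℝ 1 (fun x : F => Φ ‖x‖) x := fun x hx =>
    hΦ.contDiffAt.comp x (contDiffAt_norm ℝ hx)
  have hbound : ∀ x : F, ‖fderiv ℝ (fun x : F => Φ ‖x‖) x‖ ≤ |deriv Φ ‖x‖| := by
    intro x
    rcases eq_or_ne x 0 with rfl | hx
    · simp [hzero.fderiv]
    have hchain : HasFDerivAt (fun x : F => Φ ‖x‖) (deriv Φ ‖x‖ • fderiv ℝ norm x) x :=
      ((hΦ.differentiable one_ne_zero _).hasDerivAt).comp_hasFDerivAt x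
        ((contDiffAt_norm ℝ hx).differentiableAt one_ne_zero).hasFDerivAt
    rw [hchain.fderiv, norm_smul, Real.norm_eq_abs]
    exact mul_le_of_le_one_right (abs_nonneg _)
      (by simpa using norm_fderiv_le_of_lipschitz ℝ (lipschitzWith_one_norm (E := F)) (x₀ := x))
  refine contDiff_one_iff_fderiv.2 ⟨fun x => ?_, continuous_iff_continuousAt.2 fun x => ?_⟩
  · rcases eq_or_ne x 0 with rfl | hx
    · exact hzero.differentiableAt
    · exact (hoff x hx).differentiableAt one_ne_zero
  · rcases eq_or_ne x 0 with rfl | hx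
    · have hderiv : Tendsto (fun x : F => |deriv Φ ‖x‖|) (𝓝 0) (𝓝 0) := by
        simpa [hΦ0] using ((hΦ.continuous_deriv le_rfl).comp continuous_norm).abs.tendsto (0 : F)
      rw [ContinuousAt, hzero.fderiv]
      exact squeeze_zero_norm hbound hderiv
    · exact (hoff x hx).continuousAt_fderiv one_ne_zero

end Radial

section TestFunction

variable {F : Type*} [NormedAddCommGroup F] [InnerProductSpace ℝ F] {Φ : ℝ → ℝ}

def testFunction (c : ℝ) (g : F) (Φ : ℝ → ℝ) (τ : ℝ) (z : F) (s : ℝ) (p : ℝ × F) : ℝ :=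
  c * p.1 + ⟪p.2, g⟫ + s * (Φ (p.1 - τ) + Φ ‖p.2 - z‖)

variable {c τ s : ℝ} {g z : F}

lemma contDiff_testFunction (hΦ : ContDiff ℝ 1 Φ) (hΦ0 : deriv Φ 0 = 0) :
    ContDiff ℝ 1 (testFunction c g Φ τ z s) :=
  ((contDiff_const.mul contDiff_fst).add (contDiff_snd.inner ℝ contDiff_const)).add
    (contDiff_const.mul ((hΦ.comp (contDiff_fst.sub contDiff_const)).add
      ((contDiff_comp_norm hΦ hΦ0).comp (contDiff_snd.sub contDiff_const))))

lemma hasDerivAt_testFunction_fst (hΦ : HasDerivAt Φ 0 0) :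
    HasDerivAt (fun t => testFunction c g Φ τ z s (t, z)) c τ := by
  have hshift : HasDerivAt (fun t => Φ (t - τ)) 0 τ :=
    HasDerivAt.comp_sub_const τ τ (by rwa [sub_self])
  simpa [testFunction] using (((hasDerivAt_id τ).const_mul c).add_const ⟪z, g⟫).fun_add
    ((hshift.add_const (Φ ‖z - z‖)).const_mul s)

lemma hasGradientAt_testFunction_snd [CompleteSpace F] (hΦ : HasDerivAt Φ 0 0) :
    HasGradientAt (fun x => testFunction c g Φ τ z s (τ, x)) g z := by
  have hinner :
      HasFDerivAt (fun x : F => ⟪x, g⟫) (InnerProductSpace.toDual ℝ F g : F →L[ℝ] ℝ) z := by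
    convert (InnerProductSpace.toDual ℝ F g : F →L[ℝ] ℝ).hasFDerivAt using 1
    ext x
    simp [real_inner_comm]
  have hradial : HasFDerivAt (fun x : F => Φ ‖x - z‖) (0 : F →L[ℝ] ℝ) z := by
    have h0 : HasFDerivAt (fun x : F => Φ ‖x‖) (0 : F →L[ℝ] ℝ) (z - z) := by
      rw [sub_self]
      exact hasFDerivAt_comp_norm_zero hΦ
    simpa [Function.comp_def] using h0.comp (f := fun x : F => x - z) z (hasFDerivAt_sub_const z)
  rw [hasGradientAt_iff_hasFDerivAt]
  simpa [testFunction] using ((hinner.const_add (c * τ)).fun_add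
    ((hradial.const_add (Φ (τ - τ))).const_mul s))

lemma testFunction_sub_testFunction_self (hΦ : Φ 0 = 0) (p : ℝ × F) :
    testFunction c g Φ τ z s p - testFunction c g Φ τ z s (τ, z) =
      (p.1 - τ) * c + ⟪p.2 - z, g⟫ + s * (Φ (p.1 - τ) + Φ ‖p.2 - z‖) := by
  simp only [testFunction, sub_self, norm_zero, hΦ, inner_sub_left]
  ring

end TestFunction

lemma isBigO_abs_sub_add_norm_sub_dist {F : Type*} [SeminormedAddCommGroup F]
    (l : Filter (ℝ × F)) (τ : ℝ) (z : F) :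
    (fun p : ℝ × F => |p.1 - τ| + ‖p.2 - z‖) =O[l] fun p => dist p (τ, z) := by
  refine IsBigO.of_bound 2 (Eventually.of_forall fun p => ?_)
  have hdist : dist p (τ, z) = max |p.1 - τ| ‖p.2 - z‖ := by
    rw [Prod.dist_eq, Real.dist_eq, dist_eq_norm]
  rw [Real.norm_of_nonneg (by positivity), Real.norm_of_nonneg dist_nonneg, hdist]
  linarith [le_max_left |p.1 - τ| ‖p.2 - z‖, le_max_right |p.1 - τ| ‖p.2 - z‖]

lemma IsViscositySol.add_ham_eq_zero_of_abs_le {t0 ϑ h : ℝ} {U : Set (E l)} {V : Set (E m)}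
    {f : ℝ → E n → (ℝ → E n) → E l → E m → E n} {f0 : ℝ → E n → (ℝ → E n) → E l → E m → ℝ}
    {σ : E n → (ℝ → E n) → ℝ} {φ : ℝ → E n → (ℝ → E n) → ℝ}
    (hvis : IsViscositySol t0 ϑ h U V f f0 σ φ) {τ : ℝ} (hτ : τ ∈ Ico t0 ϑ) {z : E n}
    {w : ℝ → E n} (hw : PCh h w) {c : ℝ} {g : E n} {Φ : ℝ → ℝ} (hΦ : ContDiff ℝ 1 Φ)
    (hΦ0 : Φ 0 = 0) (hΦ'0 : deriv Φ 0 = 0) {δ : ℝ} (hδ : 0 < δ)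
    (hbound : ∀ p ∈ Oplus δ τ z,
      |φ p.1 p.2 (seg (ext0 τ z w) p.1) - φ τ z w - (p.1 - τ) * c - ⟪p.2 - z, g⟫| ≤
        Φ (p.1 - τ) + Φ ‖p.2 - z‖) :
    c + Ham U V f f0 τ z w g = 0 := by
  obtain ⟨-, -, hsub, hsup⟩ := hvis
  have hΦd : HasDerivAt Φ 0 0 := by
    simpa only [hΦ'0] using (hΦ.differentiable one_ne_zero 0).hasDerivAt
  have hderiv (s : ℝ) : deriv (fun t => testFunction c g Φ τ z s (t, z)) τ = c :=
    (hasDerivAt_testFunction_fst hΦd).deriv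
  have hgrad (s : ℝ) : gradient (fun x => testFunction c g Φ τ z s (τ, x)) z = g :=
    (hasGradientAt_testFunction_snd hΦd).gradient
  have hincr (s : ℝ) (p : ℝ × E n) := testFunction_sub_testFunction_self (c := c) (g := g)
    (τ := τ) (z := z) (s := s) hΦ0 p
  have hle := hsub τ hτ z w hw _ (contDiff_testFunction hΦ hΦ'0) δ hδ fun p hp => by
    linarith [hincr (-1) p, (abs_le.1 (hbound p hp)).1]
  have hge := hsup τ hτ z w hw _ (contDiff_testFunction hΦ hΦ'0) δ hδ fun p hp => by
    linarith [hincr 1 p, (abs_le.1 (hbound p hp)).2]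
  rw [hderiv, hgrad] at hle hge
  linarith

theorem viscosity_solution_satisfies_HJ_at_ci_differentiability_points_general
    (t0 ϑ h : ℝ) (n : ℕ)
    (l m : ℕ) (U : Set (E l)) (V : Set (E m))
    (f : ℝ → E n → (ℝ → E n) → E l → E m → E n)
    (f0 : ℝ → E n → (ℝ → E n) → E l → E m → ℝ) (σ : E n → (ℝ → E n) → ℝ)
    (φ : ℝ → E n → (ℝ → E n) → ℝ) (hvis : IsViscositySol t0 ϑ h U V f f0 σ φ)
    (τ : ℝ) (hτ : τ ∈ Ico t0 ϑ) (z : E n) (w : ℝ → E n) (hw : PCh h w)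
    (c : ℝ) (g : E n) (hci : HasCiDerivAt ϑ h φ c g τ z w) :
    c + Ham U V f f0 τ z w g = 0 := by
  obtain ⟨Φ, hΦ, hΦ0, hΦ'0, hΦ_nonneg, δ, hδ, hbound⟩ := exists_contDiff_majorant_of_isLittleO
    ((hci _ (ext0_mem_Lam hτ.2 z hw)).trans_isBigO (isBigO_abs_sub_add_norm_sub_dist _ τ z))
  refine hvis.add_ham_eq_zero_of_abs_le hτ hw hΦ hΦ0 hΦ'0 (lt_min hδ (sub_pos.2 hτ.2)) ?_
  rintro ⟨t, x⟩ ⟨⟨hτt, htδ⟩, hxδ⟩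
  have hdist : dist (t, x) (τ, z) = max (t - τ) ‖x - z‖ := by
    rw [Prod.dist_eq, Real.dist_eq, dist_eq_norm, abs_of_nonneg (sub_nonneg.2 hτt)]
  have hδ_le : min δ (ϑ - τ) ≤ δ := min_le_left _ _
  have hϑ_le : min δ (ϑ - τ) ≤ ϑ - τ := min_le_right _ _
  refine (hbound (t, x) ⟨⟨hτt, by linarith⟩, mem_univ _⟩
    (by rw [hdist]; exact max_le (by linarith) (hxδ.trans hδ_le))).trans ?_
  rw [hdist]
  rcases max_choice (t - τ) ‖x - z‖ with hmax | hmax <;> rw [hmax] <;>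
    linarith [hΦ_nonneg _ (sub_nonneg.2 hτt), hΦ_nonneg _ (norm_nonneg (x - z))]

theorem viscosity_solution_satisfies_HJ_at_ci_differentiability_points
    (t0 ϑ h : ℝ) (hth : t0 < ϑ) (hh : 0 < h) (n : ℕ) (hn : 0 < n)
    (l m : ℕ) (U : Set (E l)) (V : Set (E m))
    (hUc : IsCompact U) (hVc : IsCompact V) (hUne : U.Nonempty) (hVne : V.Nonempty)
    (f : ℝ → E n → (ℝ → E n) → E l → E m → E n)
    (f0 : ℝ → E n → (ℝ → E n) → E l → E m → ℝ) (σ : E n → (ℝ → E n) → ℝ)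
    (hC1 : CondC1 t0 ϑ h f f0) (hC2 : CondC2 t0 ϑ h U V f f0)
    (hC3 : CondC3 t0 ϑ h U V f f0) (hC4 : CondC4 t0 ϑ h U V f f0) (hC5 : CondC5 h σ)
    (φ : ℝ → E n → (ℝ → E n) → ℝ) (hvis : IsViscositySol t0 ϑ h U V f f0 σ φ)
    (τ : ℝ) (hτ : τ ∈ Ico t0 ϑ) (z : E n) (w : ℝ → E n) (hw : PCh h w)
    (c : ℝ) (g : E n) (hci : HasCiDerivAt ϑ h φ c g τ z w) :
    c + Ham U V f f0 τ z w g = 0 :=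
  viscosity_solution_satisfies_HJ_at_ci_differentiability_points_general t0 ϑ h n l m U V f f0 σ φ
    hvis τ hτ z w hw c g hci

end DGPaper
end
end

section
/- There exists ζ_* ∈ (0,h) such that the following holds: for every (τ_*,z_*,w_*(·)) ∈ G with τ_* < ϑ and every ν_* ∈ (τ_*, min{τ_* + ζ_*, ϑ}], there exists c_* > 0 such that, setting α_* = (ν_* − τ_*) c_* + 1 + max{‖z_*‖, ‖w_*(·)‖_∞}, one has |H(t,x,r(·),s) − H(t,x,r(·),s′)| ≤ c_* ‖s − s′‖ for all t ∈ [τ_*,ν_*], (x,r(·)) ∈ P(α_*), and s, s′ ∈ ℝ^n. -/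
/-!
A piecewise continuous history is bounded, so on `P(α)` the growth condition (C2) gives
`‖f‖ + |f⁰| ≤ c_f (1 + (2 + h) α)`. The Hamiltonian is an inf–sup of functions of `s` that are
affine with slope `f`, hence it is Lipschitz in `s` with any bound on `‖f‖` as constant. The
constant and the radius depend on each other through `α = (ν - τ) c + 1 + M`; with
`c = 2 c_f (1 + (2 + h)(1 + M))` and `ν - τ ≤ ζ ≤ 1 / (2 c_f (2 + h))` the bound
`c_f (1 + (2 + h) α) ≤ c / 2 + c / 2` closes the loop.
-/

noncomputable section

open MeasureTheory Set Filter Topology Asymptotics RealInnerProductSpace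
open scoped NNReal

section InfSup

/- Over an empty index type every `⨆` and `⨅` in `ℝ` is `0`. -/

variable {ι κ : Type*}

lemma ciSup_le_ciSup_add {f g : ι → ℝ} {c : ℝ} (hg : BddAbove (range g)) (hc : 0 ≤ c)
    (hfg : ∀ i, f i ≤ g i + c) : ⨆ i, f i ≤ (⨆ i, g i) + c := by
  cases isEmpty_or_nonempty ι
  · simpa using hc
  · exact ciSup_le fun i => (hfg i).trans (add_le_add_left (le_ciSup hg i) c)

lemma ciInf_le_ciInf_add {f g : ι → ℝ} {c : ℝ} (hf : BddBelow (range f)) (hc : 0 ≤ c)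
    (hfg : ∀ i, f i ≤ g i + c) : ⨅ i, f i ≤ (⨅ i, g i) + c := by
  cases isEmpty_or_nonempty ι
  · simpa using hc
  · rw [← sub_le_iff_le_add]
    exact le_ciInf fun i => sub_le_iff_le_add.2 ((ciInf_le hf i).trans (hfg i))

lemma abs_ciSup_le {f : ι → ℝ} {D : ℝ} (hD : 0 ≤ D) (hf : ∀ i, |f i| ≤ D) :
    |⨆ i, f i| ≤ D := by
  refine abs_le.2 ⟨?_, Real.iSup_le (fun i => (abs_le.1 (hf i)).2) hD⟩
  cases isEmpty_or_nonempty ι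
  · simpa using hD
  · obtain ⟨i⟩ := ‹Nonempty ι›
    exact (abs_le.1 (hf i)).1.trans
      (le_ciSup ⟨D, forall_mem_range.2 fun j => (abs_le.1 (hf j)).2⟩ i)

lemma ciInf_ciSup_le_ciInf_ciSup_add {F G : ι → κ → ℝ} {c D D' : ℝ} (hc : 0 ≤ c) (hD : 0 ≤ D)
    (hF : ∀ i j, |F i j| ≤ D) (hG : ∀ i j, G i j ≤ D') (hFG : ∀ i j, F i j ≤ G i j + c) :
    ⨅ i, ⨆ j, F i j ≤ (⨅ i, ⨆ j, G i j) + c := by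
  refine ciInf_le_ciInf_add ⟨-D, forall_mem_range.2 fun i => ?_⟩ hc fun i => ?_
  · exact (abs_le.1 (abs_ciSup_le hD (hF i))).1
  · exact ciSup_le_ciSup_add ⟨D', forall_mem_range.2 (hG i)⟩ hc (hFG i)

end InfSup

lemma Set.Ico_subset_iUnion_Ico_castSucc_succ {X : Type*} [LinearOrder X] {k : ℕ}
    (a : Fin (k + 1) → X) :
    Ico (a 0) (a (Fin.last k)) ⊆ ⋃ i : Fin k, Ico (a i.castSucc) (a i.succ) := by
  induction k with
  | zero => simp
  | succ k ih =>
    intro t ht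
    rcases Ico_subset_Ico_union_Ico ht with ht | ht
    · obtain ⟨i, hi⟩ := mem_iUnion.1 (ih (a ∘ Fin.castSucc) ht)
      exact mem_iUnion.2 ⟨i.castSucc, by simpa using hi⟩
    · exact mem_iUnion.2 ⟨Fin.last k, ht⟩

lemma Bornology.IsBounded.image_Ico_of_tendsto_nhdsLT {X : Type*} [PseudoMetricSpace X]
    {x : ℝ → X} {a b : ℝ} {L : X} (hx : ContinuousOn x (Ico a b))
    (hL : Tendsto x (𝓝[<] b) (𝓝 L)) : Bornology.IsBounded (x '' Ico a b) := by
  obtain ⟨b', hb', hnear⟩ :=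
    mem_nhdsLT_iff_exists_Ioo_subset.1 (hL (Metric.ball_mem_nhds L one_pos))
  have hsplit : Ico a b ⊆ Icc a b' ∪ Ioo b' b := fun t ht =>
    (le_or_gt t b').imp (fun htb => ⟨ht.1, htb⟩) fun htb => ⟨htb, ht.2⟩
  have hcompact : IsCompact (x '' Icc a b') :=
    isCompact_Icc.image_of_continuousOn (hx.mono fun t ht => ⟨ht.1, ht.2.trans_lt hb'⟩)
  refine (hcompact.isBounded.union (Metric.isBounded_ball (x := L) (r := 1))).subset ?_
  calc x '' Ico a b ⊆ x '' (Icc a b' ∪ Ioo b' b) := image_mono hsplit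
    _ = x '' Icc a b' ∪ x '' Ioo b' b := image_union _ _ _
    _ ⊆ x '' Icc a b' ∪ Metric.ball L 1 := union_subset_union_right _ (image_subset_iff.2 hnear)

lemma abs_real_inner_add_le {F : Type*} [NormedAddCommGroup F] [InnerProductSpace ℝ F]
    {a s : F} {b K : ℝ} (hab : ‖a‖ + |b| ≤ K) :
    |⟪a, s⟫ + b| ≤ K * (‖s‖ + 1) := by
  calc |⟪a, s⟫ + b| ≤ ‖a‖ * ‖s‖ + |b| :=
        (abs_add_le _ _).trans (add_le_add_left (abs_real_inner_le_norm a s) _)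
    _ ≤ K * ‖s‖ + K := by
        have ha : ‖a‖ ≤ K := (le_add_of_nonneg_right (abs_nonneg b)).trans hab
        have hb : |b| ≤ K := (le_add_of_nonneg_left (norm_nonneg a)).trans hab
        exact add_le_add (mul_le_mul_of_nonneg_right ha (norm_nonneg s)) hb
    _ = K * (‖s‖ + 1) := by ring

namespace DGPaper

variable {n l m : ℕ}

lemma PCOn.isBounded_image {x : ℝ → E n} {a b : ℝ} (hx : PCOn x a b) :
    Bornology.IsBounded (x '' Ico a b) := by
  obtain ⟨k, ξ, -, rfl, rfl, hpieces⟩ := hx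
  refine (Bornology.isBounded_iUnion.2 fun i => ?_).subset
    ((image_mono (Ico_subset_iUnion_Ico_castSucc_succ ξ)).trans (image_iUnion).subset)
  obtain ⟨hcont, L, hL⟩ := hpieces i
  exact .image_Ico_of_tendsto_nhdsLT hcont hL

lemma norm_le_normInf {h : ℝ} {w : ℝ → E n} (hw : PCh h w) {ξ : ℝ} (hξ : ξ ∈ Ico (-h) 0) :
    ‖w ξ‖ ≤ normInf h w := by
  obtain ⟨C, hC⟩ := isBounded_iff_forall_norm_le.1 hw.isBounded_image
  exact le_csSup ⟨C, forall_mem_image.2 fun ζ hζ => hC _ (mem_image_of_mem w hζ)⟩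
    (mem_image_of_mem _ hξ)

lemma norm1_le_mul {h α : ℝ} (hh : 0 ≤ h) {r : ℝ → E n} (hr : ∀ ξ ∈ Ico (-h) 0, ‖r ξ‖ ≤ α) :
    norm1 h r ≤ h * α := by
  have hae : ∀ᵐ ξ, ξ ∈ uIoc (-h) 0 → ‖‖r ξ‖‖ ≤ α := by
    filter_upwards [volume.ae_ne 0] with ξ hξ0 hξ
    rw [uIoc_of_le (by linarith)] at hξ
    simpa using hr ξ ⟨hξ.1.le, lt_of_le_of_ne hξ.2 hξ0⟩
  calc norm1 h r ≤ ‖norm1 h r‖ := Real.le_norm_self _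
    _ ≤ α * |0 - -h| := intervalIntegral.norm_integral_le_of_norm_le_const_ae hae
    _ = h * α := by rw [sub_neg_eq_add, zero_add, abs_of_nonneg hh, mul_comm]

lemma memP.one_add_norm_add_norm1_add_norm_le {h α : ℝ} (hh : 0 < h) {x : E n} {r : ℝ → E n}
    (hxr : memP h α x r) : 1 + ‖x‖ + norm1 h r + ‖r (-h)‖ ≤ 1 + (2 + h) * α := by
  obtain ⟨hr, hx, hrα⟩ := hxr
  have hrξ : ∀ ξ ∈ Ico (-h) 0, ‖r ξ‖ ≤ α := fun ξ hξ => (norm_le_normInf hr hξ).trans hrα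
  have hr1 := norm1_le_mul hh.le hrξ
  have hrh := hrξ (-h) ⟨le_rfl, neg_lt_zero.2 hh⟩
  linarith

lemma Ham_le_Ham_add {U : Set (E l)} {V : Set (E m)}
    {f : ℝ → E n → (ℝ → E n) → E l → E m → E n} {f0 : ℝ → E n → (ℝ → E n) → E l → E m → ℝ}
    {τ : ℝ} {z : E n} {w : ℝ → E n} {K : ℝ} (hK0 : 0 ≤ K)
    (hK : ∀ u ∈ U, ∀ v ∈ V, ‖f τ z w u v‖ + |f0 τ z w u v| ≤ K) (s s' : E n) :
    Ham U V f f0 τ z w s ≤ Ham U V f f0 τ z w s' + K * ‖s - s'‖ := by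
  refine ciInf_ciSup_le_ciInf_ciSup_add (by positivity) (by positivity)
    (fun u v => abs_real_inner_add_le (hK u u.2 v v.2))
    (fun u v => (le_abs_self _).trans (abs_real_inner_add_le (hK u u.2 v v.2))) fun u v => ?_
  have hf : ‖f τ z w u v‖ ≤ K := (le_add_of_nonneg_right (abs_nonneg _)).trans (hK u u.2 v v.2)
  have hdiff := (real_inner_le_norm (f τ z w u v) (s - s')).trans
    (mul_le_mul_of_nonneg_right hf (norm_nonneg _))
  rw [inner_sub_right] at hdiff
  linarith

lemma abs_Ham_sub_Ham_le {U : Set (E l)} {V : Set (E m)}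
    {f : ℝ → E n → (ℝ → E n) → E l → E m → E n} {f0 : ℝ → E n → (ℝ → E n) → E l → E m → ℝ}
    {τ : ℝ} {z : E n} {w : ℝ → E n} {K : ℝ} (hK0 : 0 ≤ K)
    (hK : ∀ u ∈ U, ∀ v ∈ V, ‖f τ z w u v‖ + |f0 τ z w u v| ≤ K) (s s' : E n) :
    |Ham U V f f0 τ z w s - Ham U V f f0 τ z w s'| ≤ K * ‖s - s'‖ := by
  refine abs_sub_le_iff.2 ⟨sub_le_iff_le_add'.2 (Ham_le_Ham_add hK0 hK s s'), ?_⟩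
  rw [sub_le_iff_le_add', norm_sub_rev]
  exact Ham_le_Ham_add hK0 hK s' s

theorem hamiltonian_locally_lipschitz_in_direction_general
    (t0 ϑ h : ℝ) (hh : 0 < h) (n : ℕ)
    (l m : ℕ) (U : Set (E l)) (V : Set (E m))
    (f : ℝ → E n → (ℝ → E n) → E l → E m → E n)
    (f0 : ℝ → E n → (ℝ → E n) → E l → E m → ℝ)
    (hC2 : CondC2 t0 ϑ h U V f f0) :
    ∃ ζ ∈ Ioo (0 : ℝ) h,
      ∀ τs ∈ Ico t0 ϑ, ∀ (zs : E n) (ws : ℝ → E n), PCh h ws →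
        ∀ νs ∈ Ioc τs (min (τs + ζ) ϑ),
          ∃ cs > (0 : ℝ),
            ∀ t ∈ Icc τs νs, ∀ (x : E n) (r : ℝ → E n),
              memP h ((νs - τs) * cs + 1 + max ‖zs‖ (normInf h ws)) x r →
              ∀ s s' : E n,
                |Ham U V f f0 t x r s - Ham U V f f0 t x r s'| ≤ cs * ‖s - s'‖ := by
  obtain ⟨cf, hcf, hgrowth⟩ := hC2
  set A := cf * (2 + h)
  have hA : 0 < A := by positivity
  refine ⟨min (h / 2) (1 / (2 * A)),
    ⟨by positivity, (min_le_left _ _).trans_lt (half_lt_self hh)⟩, ?_⟩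
  intro τs hτs zs ws _ νs hνs
  set M := max ‖zs‖ (normInf h ws)
  have hM : 0 ≤ M := (norm_nonneg zs).trans (le_max_left _ _)
  set cs := 2 * (cf + A * (1 + M))
  have hcs : 0 < cs := by positivity
  refine ⟨cs, hcs, fun t ht x r hxr s s' => abs_Ham_sub_Ham_le hcs.le
    (fun u hu v hv => (hgrowth t ⟨hτs.1.trans ht.1, ?_⟩ x r hxr.1 u hu v hv).trans ?_) s s'⟩
  · exact ht.2.trans (hνs.2.trans (min_le_right _ _))
  · have hν : (νs - τs) * (2 * A) ≤ 1 := by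
      have := hνs.2.trans ((min_le_left _ _).trans ((add_le_add_iff_left τs).2 (min_le_right _ _)))
      rw [← le_div_iff₀ (by positivity)]
      linarith
    calc cf * (1 + ‖x‖ + norm1 h r + ‖r (-h)‖)
        ≤ cf * (1 + (2 + h) * ((νs - τs) * cs + 1 + M)) :=
          mul_le_mul_of_nonneg_left (hxr.one_add_norm_add_norm1_add_norm_le hh) hcf.le
      _ = cs / 2 + (νs - τs) * (2 * A) * (cs / 2) := by ring
      _ ≤ cs / 2 + 1 * (cs / 2) := by gcongr
      _ = cs := by ring

theorem hamiltonian_locally_lipschitz_in_direction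
    (t0 ϑ h : ℝ) (hth : t0 < ϑ) (hh : 0 < h) (n : ℕ) (hn : 0 < n)
    (l m : ℕ) (U : Set (E l)) (V : Set (E m))
    (hUc : IsCompact U) (hVc : IsCompact V) (hUne : U.Nonempty) (hVne : V.Nonempty)
    (f : ℝ → E n → (ℝ → E n) → E l → E m → E n)
    (f0 : ℝ → E n → (ℝ → E n) → E l → E m → ℝ)
    (hC1 : CondC1 t0 ϑ h f f0) (hC2 : CondC2 t0 ϑ h U V f f0) :
    ∃ ζ ∈ Ioo (0 : ℝ) h,
      ∀ τs ∈ Ico t0 ϑ, ∀ (zs : E n) (ws : ℝ → E n), PCh h ws →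
        ∀ νs ∈ Ioc τs (min (τs + ζ) ϑ),
          ∃ cs > (0 : ℝ),
            ∀ t ∈ Icc τs νs, ∀ (x : E n) (r : ℝ → E n),
              memP h ((νs - τs) * cs + 1 + max ‖zs‖ (normInf h ws)) x r →
              ∀ s s' : E n,
                |Ham U V f f0 t x r s - Ham U V f f0 t x r s'| ≤ cs * ‖s - s'‖ :=
  hamiltonian_locally_lipschitz_in_direction_general t0 ϑ h hh n l m U V f f0 hC2

end DGPaper
end
end

section
/- Let τ < ν be real numbers, z ∈ ℝ^n, and c_*, β, θ, α_φ > 0. Set Ω^β = {(t,x) ∈ [τ,ν] × ℝ^n : ‖x − z‖ ≤ (t−τ) c_* + β} and ∂Ω^β = {(t,x) ∈ Ω^β : ‖x − z‖ = (t−τ) c_* + β}. Then there exists a continuously differentiable function η : ℝ × ℝ^n → ℝ such that: η(τ,z) = 0; η(t,x) ≥ 0 for all (t,x) ∈ Ω^β; η(t,x) ≥ 2 α_φ + 4 (ν−τ) θ for all (t,x) ∈ ∂Ω^β; and ‖∇_x η(t,x)‖ ≤ −(1/c_*) ∂η(t,x)/∂t for all (t,x) ∈ Ω^β. Moreover, there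 exists λ_η > 0 such that |η(t,x) − η(t,x′)| ≤ λ_η ‖x − x′‖ for all (t,x), (t,x′) ∈ Ω^β. -/
noncomputable section

open MeasureTheory Set Filter Topology Asymptotics RealInnerProductSpace
open scoped NNReal

/-!
The barrier is a travelling wave `η (t, x) = F (d x - c * t)` with `F` nondecreasing and `d`
smooth with `‖∇d‖ ≤ 1`: then `∇ₓη = F' • ∇d` and `∂ₜη = -c F'`, whence `‖∇ₓη‖ ≤ -(1/c) ∂ₜη`.
We take `d x = √(‖x - z‖² + ε²)` with `ε = β / 2`, a smoothing of `‖x - z‖` that dominates it,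
and for `F` a smooth step rising from `0` at `d z - c τ` to the required level at
`d z - c τ + ε`; on `∂Ω^β` one has `d x - c t ≥ ‖x - z‖ - c t = d z - c τ + ε`.
The Lipschitz bound in `x` holds for any `C¹` function on the compact set
`[τ, ν] × closedBall z ((ν - τ) c + β)`.
-/

theorem HasDerivAt.comp_hasGradientAt {E : Type*} [NormedAddCommGroup E]
    [InnerProductSpace ℝ E] [CompleteSpace E] {F : ℝ → ℝ} {F' : ℝ} {g : E → ℝ} {g' : E} {x : E}
    (hF : HasDerivAt F F' (g x)) (hg : HasGradientAt g g' x) :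
    HasGradientAt (fun y => F (g y)) (F' • g') x := by
  rw [hasGradientAt_iff_hasFDerivAt, map_smul]
  exact hF.comp_hasFDerivAt x hg.hasFDerivAt

section RegDist

variable {E : Type*} [NormedAddCommGroup E]

noncomputable def regDist (z : E) (ε : ℝ) (x : E) : ℝ := √(‖x - z‖ ^ 2 + ε ^ 2)

variable {z x : E} {ε : ℝ}

theorem regDist_pos (hε : ε ≠ 0) : 0 < regDist z ε x :=
  Real.sqrt_pos_of_pos (by positivity)

theorem regDist_self (hε : 0 ≤ ε) : regDist z ε z = ε := by
  simp [regDist, Real.sqrt_sq hε]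

theorem norm_sub_le_regDist : ‖x - z‖ ≤ regDist z ε x :=
  Real.le_sqrt_of_sq_le (le_add_of_nonneg_right (sq_nonneg ε))

variable [InnerProductSpace ℝ E]

theorem contDiff_regDist {n : WithTop ℕ∞} (hε : ε ≠ 0) : ContDiff ℝ n (regDist z ε) :=
  (((contDiff_id.sub contDiff_const).norm_sq ℝ).add contDiff_const).sqrt fun _ => by positivity

variable [CompleteSpace E]

theorem hasGradientAt_regDist (hε : ε ≠ 0) :
    HasGradientAt (regDist z ε) ((regDist z ε x)⁻¹ • (x - z)) x := by
  have hsq : HasGradientAt (fun y => ‖y - z‖ ^ 2 + ε ^ 2) ((2 : ℝ) • (x - z)) x := by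
    rw [hasGradientAt_iff_hasFDerivAt]
    refine (((hasFDerivAt_id x).sub_const z).norm_sq.add_const (ε ^ 2)).congr_fderiv ?_
    ext v
    simp
  have hsqrt : HasDerivAt Real.sqrt (1 / (2 * regDist z ε x)) (‖x - z‖ ^ 2 + ε ^ 2) :=
    Real.hasDerivAt_sqrt (by positivity)
  have hcoeff : (regDist z ε x)⁻¹ = 1 / (2 * regDist z ε x) * 2 := by
    field_simp
  rw [hcoeff, ← smul_smul]
  exact hsqrt.comp_hasGradientAt (g := fun y => ‖y - z‖ ^ 2 + ε ^ 2) hsq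

theorem norm_gradient_regDist_le_one (hε : ε ≠ 0) : ‖gradient (regDist z ε) x‖ ≤ 1 := by
  rw [(hasGradientAt_regDist hε).gradient, norm_smul, norm_inv,
    Real.norm_of_nonneg (regDist_pos hε).le]
  exact inv_mul_le_one_of_le₀ norm_sub_le_regDist (regDist_pos hε).le

end RegDist

section Barrier

variable {E : Type*} [NormedAddCommGroup E] [InnerProductSpace ℝ E] [CompleteSpace E]

theorem norm_gradient_le_neg_inv_mul_deriv_of_monotone {F : ℝ → ℝ} {d : E → ℝ} {c : ℝ}
    (hF : Differentiable ℝ F) (hF_mono : Monotone F) (hd : Differentiable ℝ d)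
    (hd_grad : ∀ x, ‖gradient d x‖ ≤ 1) (hc : c ≠ 0) (t : ℝ) (x : E) :
    ‖gradient (fun y => F (d y - c * t)) x‖ ≤ -(1 / c) * deriv (fun s => F (d x - c * s)) t := by
  have hgrad : HasGradientAt (fun y => F (d y - c * t)) (deriv F (d x - c * t) • gradient d x) x :=
    (hF _).hasDerivAt.comp_hasGradientAt ((hd x).hasGradientAt.sub_const _)
  have htime : HasDerivAt (fun s => F (d x - c * s)) (deriv F (d x - c * t) * -c) t := by
    have := (hF (d x - c * t)).hasDerivAt.comp t (((hasDerivAt_id' t).const_mul c).const_sub (d x))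
    rwa [mul_one] at this
  rw [hgrad.gradient, htime.deriv, norm_smul, Real.norm_of_nonneg hF_mono.deriv_nonneg]
  calc deriv F (d x - c * t) * ‖gradient d x‖ ≤ deriv F (d x - c * t) :=
        mul_le_of_le_one_right hF_mono.deriv_nonneg (hd_grad x)
    _ = -(1 / c) * (deriv F (d x - c * t) * -c) := by field_simp

theorem exists_contDiff_barrier (z : E) (τ c β A : ℝ) (hc : c ≠ 0) (hβ : 0 < β) (hA : 0 ≤ A) :
    ∃ η : ℝ × E → ℝ, ContDiff ℝ 1 η ∧ η (τ, z) = 0 ∧ (∀ p, 0 ≤ η p) ∧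
      (∀ t x, β ≤ ‖x - z‖ - c * (t - τ) → A ≤ η (t, x)) ∧
      ∀ t x, ‖gradient (fun y => η (t, y)) x‖ ≤ -(1 / c) * deriv (fun s => η (s, x)) t := by
  set ε := β / 2 with hε
  have hε_pos : 0 < ε := by positivity
  set F : ℝ → ℝ := fun s => A * Real.smoothTransition ((s + c * τ - ε) / ε) with hF
  have hF_diff : ContDiff ℝ 1 F := by fun_prop
  have hF_mono : Monotone F := fun s s' hss' =>
    mul_le_mul_of_nonneg_left (Real.smoothTransition.monotone (by gcongr)) hA
  refine ⟨fun p => F (regDist z ε p.2 - c * p.1), ?_, ?_, fun p => ?_, fun t x hx => ?_,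
    norm_gradient_le_neg_inv_mul_deriv_of_monotone (hF_diff.differentiable one_ne_zero) hF_mono
      ((contDiff_regDist hε_pos.ne').differentiable one_ne_zero)
      (fun _ => norm_gradient_regDist_le_one hε_pos.ne') hc⟩
  · exact hF_diff.comp (((contDiff_regDist hε_pos.ne').comp contDiff_snd).sub
      (contDiff_const.mul contDiff_fst))
  · simp [hF, regDist_self hε_pos.le]
  · exact mul_nonneg hA (Real.smoothTransition.nonneg _)
  · have h_one : 1 ≤ (regDist z ε x - c * t + c * τ - ε) / ε := by
      rw [le_div_iff₀ hε_pos]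
      linarith [norm_sub_le_regDist (z := z) (x := x) (ε := ε)]
    simp [hF, Real.smoothTransition.one_of_one_le h_one]

end Barrier

theorem LocallyLipschitz.exists_lipschitz_snd_of_isCompact {X Y Z : Type*} [PseudoMetricSpace X]
    [PseudoMetricSpace Y] [PseudoMetricSpace Z] {f : X × Y → Z} (hf : LocallyLipschitz f)
    {s : Set X} {t : Set Y} (hs : IsCompact s) (ht : IsCompact t) :
    ∃ L > (0 : ℝ), ∀ a ∈ s, ∀ y ∈ t, ∀ y' ∈ t, dist (f (a, y)) (f (a, y')) ≤ L * dist y y' := by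
  obtain ⟨K, hK⟩ := (hf.locallyLipschitzOn (s := s ×ˢ t)).exists_lipschitzOnWith_of_compact
    (hs.prod ht)
  refine ⟨K + 1, by positivity, fun a ha y hy y' hy' => ?_⟩
  calc dist (f (a, y)) (f (a, y')) ≤ K * dist (a, y) (a, y') :=
        hK.dist_le_mul _ ⟨ha, hy⟩ _ ⟨ha, hy'⟩
    _ = K * dist y y' := by simp [Prod.dist_eq]
    _ ≤ (K + 1) * dist y y' := by gcongr; simp

namespace DGPaper

theorem test_function_eta_exists_general (n : ℕ) (τ ν : ℝ) (hτν : τ < ν) (z : E n)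
    (cs β θ αφ : ℝ) (hcs : 0 < cs) (hβ : 0 < β) (hθ : 0 < θ) (hαφ : 0 < αφ) :
    ∃ η : ℝ × E n → ℝ, ContDiff ℝ 1 η ∧ η (τ, z) = 0 ∧
      (∀ (t : ℝ) (x : E n), t ∈ Icc τ ν → ‖x - z‖ ≤ (t - τ) * cs + β → 0 ≤ η (t, x)) ∧
      (∀ (t : ℝ) (x : E n), t ∈ Icc τ ν → ‖x - z‖ = (t - τ) * cs + β →
        2 * αφ + 4 * (ν - τ) * θ ≤ η (t, x)) ∧
      (∀ (t : ℝ) (x : E n), t ∈ Icc τ ν → ‖x - z‖ ≤ (t - τ) * cs + β →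
        ‖gradient (fun y => η (t, y)) x‖ ≤ -(1 / cs) * deriv (fun s => η (s, x)) t) ∧
      ∃ lη > (0 : ℝ), ∀ (t : ℝ) (x x' : E n), t ∈ Icc τ ν →
        ‖x - z‖ ≤ (t - τ) * cs + β → ‖x' - z‖ ≤ (t - τ) * cs + β →
        |η (t, x) - η (t, x')| ≤ lη * ‖x - x'‖ := by
  have hA : 0 ≤ 2 * αφ + 4 * (ν - τ) * θ := by
    have := sub_pos.2 hτν
    positivity
  obtain ⟨η, hη_smooth, hη_zero, hη_nonneg, hη_level, hη_grad⟩ :=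
    exists_contDiff_barrier z τ cs β _ hcs.ne' hβ hA
  obtain ⟨L, hL_pos, hL⟩ := hη_smooth.locallyLipschitz.exists_lipschitz_snd_of_isCompact
    isCompact_Icc (isCompact_closedBall z ((ν - τ) * cs + β))
  refine ⟨η, hη_smooth, hη_zero, fun t x _ _ => hη_nonneg _,
    fun t x _ hx => hη_level t x (by linarith), fun t x _ _ => hη_grad t x,
    L, hL_pos, fun t x x' ht hx hx' => ?_⟩
  have h_ball : ∀ y : E n, ‖y - z‖ ≤ (t - τ) * cs + β →
      y ∈ Metric.closedBall z ((ν - τ) * cs + β) :=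
    fun y hy => mem_closedBall_iff_norm.2 (hy.trans (by gcongr; exact ht.2))
  simpa [Real.dist_eq, dist_eq_norm] using hL t ht x (h_ball x hx) x' (h_ball x' hx')

theorem test_function_eta_exists (n : ℕ) (hn : 0 < n) (τ ν : ℝ) (hτν : τ < ν) (z : E n)
    (cs β θ αφ : ℝ) (hcs : 0 < cs) (hβ : 0 < β) (hθ : 0 < θ) (hαφ : 0 < αφ) :
    ∃ η : ℝ × E n → ℝ, ContDiff ℝ 1 η ∧ η (τ, z) = 0 ∧
      (∀ (t : ℝ) (x : E n), t ∈ Icc τ ν → ‖x - z‖ ≤ (t - τ) * cs + β → 0 ≤ η (t, x)) ∧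
      (∀ (t : ℝ) (x : E n), t ∈ Icc τ ν → ‖x - z‖ = (t - τ) * cs + β →
        2 * αφ + 4 * (ν - τ) * θ ≤ η (t, x)) ∧
      (∀ (t : ℝ) (x : E n), t ∈ Icc τ ν → ‖x - z‖ ≤ (t - τ) * cs + β →
        ‖gradient (fun y => η (t, y)) x‖ ≤ -(1 / cs) * deriv (fun s => η (s, x)) t) ∧
      ∃ lη > (0 : ℝ), ∀ (t : ℝ) (x x' : E n), t ∈ Icc τ ν →
        ‖x - z‖ ≤ (t - τ) * cs + β → ‖x' - z‖ ≤ (t - τ) * cs + β →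
        |η (t, x) - η (t, x')| ≤ lη * ‖x - x'‖ :=
  test_function_eta_exists_general n τ ν hτν z cs β θ αφ hcs hβ hθ hαφ

end DGPaper
end
end
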